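/- arXiv:1901.09732 — 8 statements merged into one kernel-verified Lean document; each statement's English description precedes it below -/
import Mathlib

section
/- Let F : ℝ^n × A → ℝ^n with a : [0,∞) → A, and suppose s ↦ F(s, a) is bounded by M and K-Lipschitz in s uniformly in a. Fix π : ℝ^n → A such that s ↦ F(s, π(s)) is bounded and K-Lipschitz. Let s_t solve ds_t/dt = F(s_t, π(s_t)) with s_0 given, and for δt > 0 define the discretized trajectory s_δt^0 = s_0 and s_δt^{k+1} the time-δt value of the solution of d s̃/dt = F(s̃, π(s_δt^k)) started at s_δt^k. Then there exists C > 0 such that for all t ≥ 0, ‖s_t − s_δt^{⌊t/δt⌋}‖ ≤ δt · (C/K) · e^{Kt}. -/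
/-!
Along one step of length `h`, the closed-loop trajectory `x` and the frozen-action trajectory `y`
have velocities `F(x, π x)` and `F(y, π y₀)`. Both fields are `K`-Lipschitz and agree at `y₀`, so
their difference is at most `K‖x - y‖ + 2K‖y - y₀‖ ≤ K‖x - y‖ + 2KMh`. Grönwall's inequality turns
this into `eₖ₊₁ ≤ eₖ e^{Kh} + 2Mh (e^{Kh} - 1)` for the errors `eₖ` at the grid points, which
sums to `eₖ ≤ 2Mh (e^{Kkh} - 1)`. Between grid points the trajectory moves at most `Mh`.
-/

open Set
open scoped NNReal

theorem LipschitzWith.norm_sub_apply_le_of_eq {E : Type*} [SeminormedAddCommGroup E]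
    {f g : E → E} {K : ℝ≥0} (hf : LipschitzWith K f) (hg : LipschitzWith K g)
    {a : E} (hfg : f a = g a) (x y : E) :
    ‖f x - g y‖ ≤ K * ‖x - y‖ + 2 * K * ‖y - a‖ := by
  calc ‖f x - g y‖ = ‖(f x - f y) + (f y - f a) + (g a - g y)‖ := by rw [hfg]; abel_nf
    _ ≤ ‖f x - f y‖ + ‖f y - f a‖ + ‖g a - g y‖ := norm_add₃_le
    _ ≤ K * ‖x - y‖ + K * ‖y - a‖ + K * ‖a - y‖ := by
      gcongr
      exacts [hf.norm_sub_le x y, hf.norm_sub_le y a, hg.norm_sub_le a y]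
    _ = K * ‖x - y‖ + 2 * K * ‖y - a‖ := by rw [norm_sub_rev a y]; ring

section

variable {E : Type*} [NormedAddCommGroup E] [NormedSpace ℝ E]

theorem norm_sub_le_of_hasDerivAt_of_norm_le {u u' : ℝ → E} {M a b : ℝ}
    (hu : ∀ t ∈ Icc a b, HasDerivAt u (u' t) t) (hM : ∀ t ∈ Icc a b, ‖u' t‖ ≤ M)
    (hab : a ≤ b) :
    ‖u b - u a‖ ≤ M * (b - a) :=
  norm_image_sub_le_of_norm_deriv_le_segment' (fun t ht => (hu t ht).hasDerivWithinAt)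
    (fun t ht => hM t (Ico_subset_Icc_self ht)) b (right_mem_Icc.2 hab)

theorem norm_sub_le_of_frozen_step {f g : E → E} {K : ℝ≥0} {M h : ℝ}
    (hf : LipschitzWith K f) (hg : LipschitzWith K g) (hgM : ∀ z, ‖g z‖ ≤ M)
    {x y : ℝ → E} (hx : ∀ t ∈ Icc 0 h, HasDerivAt x (f (x t)) t)
    (hy : ∀ t ∈ Icc 0 h, HasDerivAt y (g (y t)) t) (hfg : f (y 0) = g (y 0)) (hh : 0 ≤ h) :
    ‖x h - y h‖ ≤
      ‖x 0 - y 0‖ * Real.exp (K * h) + 2 * M * h * (Real.exp (K * h) - 1) := by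
  have hM : 0 ≤ M := (norm_nonneg _).trans (hgM 0)
  have hdrift : ∀ t ∈ Icc 0 h, ‖y t - y 0‖ ≤ M * h := fun t ht =>
    calc ‖y t - y 0‖ ≤ M * (t - 0) := norm_sub_le_of_hasDerivAt_of_norm_le
          (fun τ hτ => hy τ ⟨hτ.1, hτ.2.trans ht.2⟩) (fun τ _ => hgM _) ht.1
      _ ≤ M * h := by gcongr; linarith [ht.2]
  have hbound : ∀ t ∈ Ico 0 h, ‖f (x t) - g (y t)‖ ≤ K * ‖x t - y t‖ + K * (2 * M * h) :=
    fun t ht => (hf.norm_sub_apply_le_of_eq hg hfg _ _).trans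
      (by nlinarith [K.coe_nonneg, hdrift t (Ico_subset_Icc_self ht)])
  have hgron := norm_le_gronwallBound_of_norm_deriv_right_le (f := fun t => x t - y t)
    (fun t ht => ((hx t ht).sub (hy t ht)).continuousAt.continuousWithinAt)
    (fun t ht => ((hx t (Ico_subset_Icc_self ht)).sub
      (hy t (Ico_subset_Icc_self ht))).hasDerivWithinAt)
    le_rfl hbound h (right_mem_Icc.2 hh)
  rcases eq_or_ne (K : ℝ) 0 with hK | hK
  · simpa [hK, gronwallBound_K0] using hgron
  · simpa [gronwallBound_of_K_ne_0 hK, mul_div_cancel_left₀ _ hK] using hgron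

end

theorem le_mul_pow_sub_one_of_le_mul_add {e : ℕ → ℝ} {q b : ℝ} (hq : 0 ≤ q) (h0 : e 0 ≤ 0)
    (hstep : ∀ k, e (k + 1) ≤ e k * q + b * (q - 1)) (k : ℕ) : e k ≤ b * (q ^ k - 1) := by
  induction k with
  | zero => simpa using h0
  | succ k ih =>
    calc e (k + 1) ≤ e k * q + b * (q - 1) := hstep k
      _ ≤ b * (q ^ k - 1) * q + b * (q - 1) := by gcongr
      _ = b * (q ^ (k + 1) - 1) := by ring

theorem norm_sub_frozen_action_le {E A : Type*} [NormedAddCommGroup E] [NormedSpace ℝ E]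
    {F : E → A → E} {pol : E → A} {K : ℝ≥0} {M h : ℝ} (hh : 0 ≤ h)
    (hFbound : ∀ x a, ‖F x a‖ ≤ M) (hFlip : ∀ a, LipschitzWith K fun x => F x a)
    (hFpollip : LipschitzWith K fun x => F x (pol x))
    {s : ℝ → E} (hs : ∀ t, 0 ≤ t → HasDerivAt s (F (s t) (pol (s t))) t)
    {sd : ℕ → E} (hsd0 : sd 0 = s 0)
    (hsd : ∀ k : ℕ, ∃ u : ℝ → E, u 0 = sd k ∧
      (∀ t, 0 ≤ t → HasDerivAt u (F (u t) (pol (sd k))) t) ∧ sd (k + 1) = u h)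
    (k : ℕ) : ‖s (k * h) - sd k‖ ≤ 2 * M * h * (Real.exp (K * (k * h)) - 1) := by
  have hstep : ∀ k : ℕ, ‖s ((k + 1 : ℕ) * h) - sd (k + 1)‖
      ≤ ‖s (k * h) - sd k‖ * Real.exp (K * h) + 2 * M * h * (Real.exp (K * h) - 1) := by
    intro k
    obtain ⟨u, hu0, hu, hsucc⟩ := hsd k
    have hx : ∀ t ∈ Icc 0 h, HasDerivAt (fun τ => s (k * h + τ))
        (F (s (k * h + t)) (pol (s (k * h + t)))) t := fun t ht =>
      (hs _ (by have := ht.1; positivity)).comp_const_add _ _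
    have hfrozen := norm_sub_le_of_frozen_step hFpollip (hFlip (pol (sd k))) (hFbound · _) hx
      (fun t ht => hu t ht.1) (by rw [hu0]) hh
    simp only [add_zero, hu0, ← hsucc] at hfrozen
    rwa [Nat.cast_succ, add_one_mul]
  calc ‖s (k * h) - sd k‖ ≤ 2 * M * h * (Real.exp (K * h) ^ k - 1) :=
        le_mul_pow_sub_one_of_le_mul_add (e := fun k : ℕ => ‖s (k * h) - sd k‖)
          (Real.exp_pos _).le (by simp [hsd0]) hstep k
    _ = 2 * M * h * (Real.exp (K * (k * h)) - 1) := by rw [← Real.exp_nat_mul]; ring_nf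

theorem Nat.floor_div_mul_le_and_sub_le {t h : ℝ} (ht : 0 ≤ t) (hh : 0 < h) :
    ⌊t / h⌋₊ * h ≤ t ∧ t - ⌊t / h⌋₊ * h ≤ h := by
  constructor
  · exact (le_div_iff₀ hh).1 (Nat.floor_le (div_nonneg ht hh.le))
  · have := (div_lt_iff₀ hh).1 (Nat.lt_floor_add_one (t / h))
    linarith

/-- Convergence (with explicit error bound) of the frozen-action Euler-type discretization
of a controlled ODE to the continuous-time trajectory. -/
theorem frozen_action_discretization_error
    {n : ℕ} {A : Type*} (F : EuclideanSpace ℝ (Fin n) → A → EuclideanSpace ℝ (Fin n))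
    (pol : EuclideanSpace ℝ (Fin n) → A) (K M : ℝ) (hK : 0 < K) (hM : 0 < M)
    (hFbound : ∀ s a, ‖F s a‖ ≤ M)
    (hFlip : ∀ a, LipschitzWith (Real.toNNReal K) (fun s => F s a))
    (hFpollip : LipschitzWith (Real.toNNReal K) (fun s => F s (pol s)))
    (s₀ : EuclideanSpace ℝ (Fin n))
    (s : ℝ → EuclideanSpace ℝ (Fin n)) (hs0 : s 0 = s₀)
    (hs : ∀ t : ℝ, 0 ≤ t → HasDerivAt s (F (s t) (pol (s t))) t)
    (sd : ℝ → ℕ → EuclideanSpace ℝ (Fin n))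
    (hsd0 : ∀ δt : ℝ, 0 < δt → sd δt 0 = s₀)
    (hsd : ∀ δt : ℝ, 0 < δt → ∀ k : ℕ,
      ∃ u : ℝ → EuclideanSpace ℝ (Fin n), u 0 = sd δt k ∧
        (∀ t : ℝ, 0 ≤ t → HasDerivAt u (F (u t) (pol (sd δt k))) t) ∧
        sd δt (k + 1) = u δt) :
    ∃ C : ℝ, 0 < C ∧ ∀ δt : ℝ, 0 < δt → ∀ t : ℝ, 0 ≤ t →
      ‖s t - sd δt ⌊t / δt⌋₊‖ ≤ δt * (C / K) * Real.exp (K * t) := by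
  refine ⟨3 * M * K, by positivity, fun δt hδt t ht => ?_⟩
  set k := ⌊t / δt⌋₊
  obtain ⟨hkt, htk⟩ := Nat.floor_div_mul_le_and_sub_le ht hδt
  have hgrid := norm_sub_frozen_action_le hδt.le hFbound hFlip hFpollip hs
    (hsd0 δt hδt ▸ hs0.symm) (hsd δt hδt) k
  rw [Real.coe_toNNReal K hK.le] at hgrid
  have hdrift : ‖s t - s (k * δt)‖ ≤ M * (t - k * δt) :=
    norm_sub_le_of_hasDerivAt_of_norm_le
      (fun τ hτ => hs τ ((by positivity : (0 : ℝ) ≤ k * δt).trans hτ.1))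
      (fun τ _ => hFbound _ _) hkt
  have hexp : Real.exp (K * (k * δt)) ≤ Real.exp (K * t) := by gcongr
  calc ‖s t - sd δt k‖ ≤ ‖s t - s (k * δt)‖ + ‖s (k * δt) - sd δt k‖ :=
        norm_sub_le_norm_sub_add_norm_sub _ _ _
    _ ≤ M * δt + 2 * M * δt * (Real.exp (K * t) - 1) := by
        gcongr
        · exact hdrift.trans (by gcongr)
        · exact hgrid.trans (by gcongr)
    _ ≤ δt * (3 * M * K / K) * Real.exp (K * t) := by
        rw [mul_div_cancel_right₀ _ hK.ne']
        nlinarith [Real.one_le_exp (by positivity : 0 ≤ K * t), mul_pos hM hδt]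
end

section
/- Under the hypotheses of the trajectory-convergence lemma, the discretized trajectories converge pointwise: for every t ≥ 0, s_δt^{⌊t/δt⌋} → s_t as δt → 0. -/
/-!
Over one step of length `δt` the frozen-action trajectory moves by at most `M δt`, so it solves
the closed-loop ODE up to a defect `2 K M δt`. Grönwall's inequality turns this into the one-step
recursion `eₖ₊₁ ≤ eₖ e^{K δt} + 2 M δt (e^{K δt} - 1)` for the error at the grid times, whence
`eₖ ≤ 2 M δt (e^{K k δt} - 1)`. At `k = ⌊t / δt⌋` the grid time lies within `δt` of `t`, so the
error at time `t` is `O(δt)`.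
-/

open Real Filter Set NNReal

theorem gronwallBound_K_mul (δ K c x : ℝ) :
    gronwallBound δ K (K * c) x = δ * exp (K * x) + c * (exp (K * x) - 1) := by
  rcases eq_or_ne K 0 with rfl | hK
  · simp [gronwallBound_K0]
  · rw [gronwallBound_of_K_ne_0 hK]
    field_simp

theorem dist_le_of_norm_deriv_le {E : Type*} [NormedAddCommGroup E] [NormedSpace ℝ E]
    {g g' : ℝ → E} {M a b : ℝ} (hg : ∀ t ∈ Icc a b, HasDerivAt g (g' t) t)
    (hg' : ∀ t ∈ Icc a b, ‖g' t‖ ≤ M) (hab : a ≤ b) :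
    dist (g b) (g a) ≤ M * (b - a) := by
  rw [dist_eq_norm]
  exact norm_image_sub_le_of_norm_deriv_le_segment' (fun t ht => (hg t ht).hasDerivWithinAt)
    (fun t ht => hg' t (Ico_subset_Icc_self ht)) b (right_mem_Icc.2 hab)

section FrozenAction

variable {E A : Type*} [NormedAddCommGroup E] [NormedSpace ℝ E]
  {F : E → A → E} {pol : E → A} {K : ℝ≥0} {M : ℝ}

theorem dist_frozenAction_step_le (hFbound : ∀ x a, ‖F x a‖ ≤ M)
    (hFlip : ∀ a, LipschitzWith K fun x => F x a)
    (hFpollip : LipschitzWith K fun x => F x (pol x))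
    {v u : ℝ → E} {δ : ℝ} (hδ : 0 ≤ δ)
    (hv : ∀ t ∈ Icc 0 δ, HasDerivAt v (F (v t) (pol (v t))) t)
    (hu : ∀ t ∈ Icc 0 δ, HasDerivAt u (F (u t) (pol (u 0))) t) :
    dist (v δ) (u δ) ≤ dist (v 0) (u 0) * exp (K * δ) + 2 * M * δ * (exp (K * δ) - 1) := by
  have hM : 0 ≤ M := (norm_nonneg _).trans (hFbound (u 0) (pol (u 0)))
  have hdrift : ∀ t ∈ Icc 0 δ, dist (u t) (u 0) ≤ M * δ := fun t ht =>
    (dist_le_of_norm_deriv_le (fun τ hτ => hu τ ⟨hτ.1, hτ.2.trans ht.2⟩)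
      (fun _ _ => hFbound _ _) ht.1).trans (by nlinarith [ht.2])
  have hdefect : ∀ t ∈ Ico 0 δ,
      dist (F (u t) (pol (u 0))) (F (u t) (pol (u t))) ≤ K * (2 * M * δ) := by
    intro t ht
    have hdt := hdrift t (Ico_subset_Icc_self ht)
    calc dist (F (u t) (pol (u 0))) (F (u t) (pol (u t)))
        ≤ dist (F (u t) (pol (u 0))) (F (u 0) (pol (u 0)))
          + dist (F (u 0) (pol (u 0))) (F (u t) (pol (u t))) := dist_triangle _ _ _
      _ ≤ K * dist (u t) (u 0) + K * dist (u 0) (u t) :=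
          add_le_add ((hFlip _).dist_le_mul _ _) (hFpollip.dist_le_mul _ _)
      _ ≤ K * (M * δ) + K * (M * δ) := by
          rw [dist_comm (u 0)]
          gcongr
      _ = K * (2 * M * δ) := by ring
  have hgron := dist_le_of_approx_trajectories_ODE (v := fun _ x => F x (pol x))
    (fun _ => hFpollip) (fun t ht => (hv t ht).continuousAt.continuousWithinAt)
    (fun t ht => (hv t (Ico_subset_Icc_self ht)).hasDerivWithinAt)
    (fun t _ => (dist_self _).le) (fun t ht => (hu t ht).continuousAt.continuousWithinAt)
    (fun t ht => (hu t (Ico_subset_Icc_self ht)).hasDerivWithinAt) hdefect le_rfl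
    δ (right_mem_Icc.2 hδ)
  rwa [zero_add, sub_zero, gronwallBound_K_mul] at hgron

variable {s : ℝ → E} {sd : ℕ → E} {δ : ℝ}

theorem dist_frozenAction_le (hFbound : ∀ x a, ‖F x a‖ ≤ M)
    (hFlip : ∀ a, LipschitzWith K fun x => F x a)
    (hFpollip : LipschitzWith K fun x => F x (pol x))
    (hs : ∀ t : ℝ, 0 ≤ t → HasDerivAt s (F (s t) (pol (s t))) t)
    (hsd0 : sd 0 = s 0)
    (hsd : ∀ k : ℕ, ∃ u : ℝ → E, u 0 = sd k ∧
      (∀ t : ℝ, 0 ≤ t → HasDerivAt u (F (u t) (pol (sd k))) t) ∧ sd (k + 1) = u δ)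
    (hδ : 0 ≤ δ) (k : ℕ) :
    dist (sd k) (s (k * δ)) ≤ 2 * M * δ * (exp (K * (k * δ)) - 1) := by
  induction k with
  | zero => simp [hsd0]
  | succ k ih =>
    obtain ⟨u, hu0, hu, hsdu⟩ := hsd k
    have hstep := dist_frozenAction_step_le hFbound hFlip hFpollip hδ
      (v := fun t => s (k * δ + t)) (u := u)
      (fun t ht => (hs _ (by positivity [ht.1])).comp_const_add _ _)
      (fun t ht => hu0 ▸ hu t ht.1)
    simp only [add_zero, hu0] at hstep
    have hexp : exp (K * ((k + 1 : ℕ) * δ)) = exp (K * (k * δ)) * exp (K * δ) := by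
      rw [← exp_add]; push_cast; ring_nf
    calc dist (sd (k + 1)) (s ((k + 1 : ℕ) * δ))
        = dist (s (k * δ + δ)) (u δ) := by
          rw [hsdu, dist_comm]; push_cast; ring_nf
      _ ≤ dist (s (k * δ)) (sd k) * exp (K * δ) + 2 * M * δ * (exp (K * δ) - 1) := hstep
      _ ≤ 2 * M * δ * (exp (K * (k * δ)) - 1) * exp (K * δ)
            + 2 * M * δ * (exp (K * δ) - 1) := by
          rw [dist_comm]; gcongr
      _ = 2 * M * δ * (exp (K * ((k + 1 : ℕ) * δ)) - 1) := by rw [hexp]; ring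

theorem dist_frozenAction_floor_le (hFbound : ∀ x a, ‖F x a‖ ≤ M)
    (hFlip : ∀ a, LipschitzWith K fun x => F x a)
    (hFpollip : LipschitzWith K fun x => F x (pol x))
    (hs : ∀ t : ℝ, 0 ≤ t → HasDerivAt s (F (s t) (pol (s t))) t)
    (hsd0 : sd 0 = s 0)
    (hsd : ∀ k : ℕ, ∃ u : ℝ → E, u 0 = sd k ∧
      (∀ t : ℝ, 0 ≤ t → HasDerivAt u (F (u t) (pol (sd k))) t) ∧ sd (k + 1) = u δ)
    (hδ : 0 < δ) {t : ℝ} (ht : 0 ≤ t) :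
    dist (sd ⌊t / δ⌋₊) (s t) ≤ (2 * M * exp (K * t) + M) * δ := by
  have hM : 0 ≤ M := (norm_nonneg _).trans (hFbound (s 0) (pol (s 0)))
  set k := ⌊t / δ⌋₊
  have hkt : k * δ ≤ t := (le_div_iff₀ hδ).1 (Nat.floor_le (div_nonneg ht hδ.le))
  have htk : t < k * δ + δ := by
    have := (div_lt_iff₀ hδ).1 (Nat.lt_floor_add_one (t / δ))
    linarith
  have hgrid := dist_frozenAction_le hFbound hFlip hFpollip hs hsd0 hsd hδ.le k
  have htail : dist (s t) (s (k * δ)) ≤ M * (t - k * δ) :=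
    dist_le_of_norm_deriv_le (fun τ hτ => hs τ ((by positivity : (0 : ℝ) ≤ k * δ).trans hτ.1))
      (fun _ _ => hFbound _ _) hkt
  have hexp : exp (K * (k * δ)) ≤ exp (K * t) := by gcongr
  calc dist (sd k) (s t) ≤ dist (sd k) (s (k * δ)) + dist (s t) (s (k * δ)) :=
        dist_triangle_right _ _ _
    _ ≤ 2 * M * δ * (exp (K * (k * δ)) - 1) + M * (t - k * δ) := add_le_add hgrid htail
    _ ≤ 2 * M * δ * exp (K * t) + M * δ := by
        gcongr
        · linarith
        · linarith
    _ = (2 * M * exp (K * t) + M) * δ := by ring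

end FrozenAction

theorem frozen_action_discretization_pointwise_general
    {n : ℕ} {A : Type*} (F : EuclideanSpace ℝ (Fin n) → A → EuclideanSpace ℝ (Fin n))
    (pol : EuclideanSpace ℝ (Fin n) → A) (K M : ℝ)
    (hFbound : ∀ s a, ‖F s a‖ ≤ M)
    (hFlip : ∀ a, LipschitzWith (Real.toNNReal K) (fun s => F s a))
    (hFpollip : LipschitzWith (Real.toNNReal K) (fun s => F s (pol s)))
    (s₀ : EuclideanSpace ℝ (Fin n))
    (s : ℝ → EuclideanSpace ℝ (Fin n)) (hs0 : s 0 = s₀)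
    (hs : ∀ t : ℝ, 0 ≤ t → HasDerivAt s (F (s t) (pol (s t))) t)
    (sd : ℝ → ℕ → EuclideanSpace ℝ (Fin n))
    (hsd0 : ∀ δt : ℝ, 0 < δt → sd δt 0 = s₀)
    (hsd : ∀ δt : ℝ, 0 < δt → ∀ k : ℕ,
      ∃ u : ℝ → EuclideanSpace ℝ (Fin n), u 0 = sd δt k ∧
        (∀ t : ℝ, 0 ≤ t → HasDerivAt u (F (u t) (pol (sd δt k))) t) ∧
        sd δt (k + 1) = u δt) :
    ∀ t : ℝ, 0 ≤ t →
      Tendsto (fun δt : ℝ => sd δt ⌊t / δt⌋₊) (nhdsWithin 0 (Set.Ioi 0)) (nhds (s t)) := by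
  intro t ht
  set C := 2 * M * exp (K.toNNReal * t) + M
  rw [tendsto_iff_dist_tendsto_zero]
  refine squeeze_zero' (g := fun δt => C * δt) (Eventually.of_forall fun _ => dist_nonneg) ?_ ?_
  · filter_upwards [self_mem_nhdsWithin] with δt hδt
    exact dist_frozenAction_floor_le hFbound hFlip hFpollip hs (by rw [hsd0 δt hδt, hs0])
      (hsd δt hδt) hδt ht
  · have hC := (continuous_const_mul C).tendsto 0
    rw [mul_zero] at hC
    exact hC.mono_left nhdsWithin_le_nhds

/-- Convergence (with explicit error bound) of the frozen-action Euler-type discretization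
of a controlled ODE to the continuous-time trajectory. -/
theorem frozen_action_discretization_pointwise
    {n : ℕ} {A : Type*} (F : EuclideanSpace ℝ (Fin n) → A → EuclideanSpace ℝ (Fin n))
    (pol : EuclideanSpace ℝ (Fin n) → A) (K M : ℝ) (hK : 0 < K) (hM : 0 < M)
    (hFbound : ∀ s a, ‖F s a‖ ≤ M)
    (hFlip : ∀ a, LipschitzWith (Real.toNNReal K) (fun s => F s a))
    (hFpollip : LipschitzWith (Real.toNNReal K) (fun s => F s (pol s)))
    (s₀ : EuclideanSpace ℝ (Fin n))
    (s : ℝ → EuclideanSpace ℝ (Fin n)) (hs0 : s 0 = s₀)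
    (hs : ∀ t : ℝ, 0 ≤ t → HasDerivAt s (F (s t) (pol (s t))) t)
    (sd : ℝ → ℕ → EuclideanSpace ℝ (Fin n))
    (hsd0 : ∀ δt : ℝ, 0 < δt → sd δt 0 = s₀)
    (hsd : ∀ δt : ℝ, 0 < δt → ∀ k : ℕ,
      ∃ u : ℝ → EuclideanSpace ℝ (Fin n), u 0 = sd δt k ∧
        (∀ t : ℝ, 0 ≤ t → HasDerivAt u (F (u t) (pol (sd δt k))) t) ∧
        sd δt (k + 1) = u δt) :
    ∀ t : ℝ, 0 ≤ t →
      Tendsto (fun δt : ℝ => sd δt ⌊t / δt⌋₊) (nhdsWithin 0 (Set.Ioi 0)) (nhds (s t)) :=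
  frozen_action_discretization_pointwise_general F pol K M hFbound hFlip hFpollip s₀ s hs0 hs sd
    hsd0 hsd
end

section
/- Let r : S × A → ℝ be bounded with ‖r‖_∞ < ∞, γ ∈ (0,1), and let s, s̃ : [0,∞) → S be two trajectories with r̃(s) := r(s, π(s)) L_r-Lipschitz in s and ‖s_t − s̃_t‖ ≤ (Cδt/K) e^{Kt} for all t. Then |∫_0^∞ γ^t (r̃(s̃_t) − r̃(s_t)) dt| → 0 as δt → 0. -/
open Real Filter MeasureTheory

/-- Convergence of discounted returns along converging trajectories: if the
`δt`-indexed trajectories `s̃` stay within `(C δt / K) e^{K t}` of `s`, and the reward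
along the policy is bounded and Lipschitz, then the difference of discounted returns
vanishes as `δt → 0⁺`. -/
theorem discounted_return_convergence
    {n : ℕ} (γ C K Lr R : ℝ) (hγ0 : 0 < γ) (hγ1 : γ < 1)
    (hC : 0 < C) (hK : 0 < K) (hLr : 0 < Lr) (hR : 0 ≤ R)
    (rt : EuclideanSpace ℝ (Fin n) → ℝ)
    (hrbound : ∀ x, |rt x| ≤ R)
    (hrlip : LipschitzWith (Real.toNNReal Lr) rt)
    (s : ℝ → EuclideanSpace ℝ (Fin n))
    (st : ℝ → ℝ → EuclideanSpace ℝ (Fin n))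
    (hclose : ∀ δt : ℝ, 0 < δt → ∀ t : ℝ, 0 ≤ t →
      ‖s t - st δt t‖ ≤ C * δt / K * Real.exp (K * t)) :
    Tendsto (fun δt : ℝ =>
        |∫ t in Set.Ioi (0:ℝ), Real.exp (t * Real.log γ) * (rt (st δt t) - rt (s t))|)
      (nhdsWithin 0 (Set.Ioi 0)) (nhds 0) := by
  have hlogγ : Real.log γ < 0 := Real.log_neg hγ0 hγ1
  -- the dominating/majorizing family
  set g : ℝ → ℝ → ℝ := fun δt t =>
    Real.exp (t * Real.log γ) * min (2 * R) (Lr * (C * δt / K * Real.exp (K * t))) with hg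
  -- the exponential weight is integrable on Ioi 0
  have hexp_int : IntegrableOn (fun t : ℝ => Real.exp (t * Real.log γ)) (Set.Ioi 0) := by
    have := exp_neg_integrableOn_Ioi 0 (b := -Real.log γ) (by linarith)
    simpa [neg_mul, mul_comm] using this
  have hbound_int : IntegrableOn (fun t : ℝ => 2 * R * Real.exp (t * Real.log γ))
      (Set.Ioi 0) := hexp_int.const_mul (2 * R)
  -- g δt is continuous in t
  have hg_cont : ∀ δt : ℝ, Continuous (g δt) := by
    intro δt
    apply Continuous.mul (by continuity)
    exact continuous_const.min (by continuity)
  -- for δt > 0, g δt is nonneg and dominated on Ioi 0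
  have hg_nonneg : ∀ δt : ℝ, 0 < δt → ∀ t : ℝ, 0 ≤ g δt t := by
    intro δt hδt t
    apply mul_nonneg (Real.exp_pos _).le
    apply le_min (by linarith)
    positivity
  have hg_le : ∀ δt : ℝ, ∀ t : ℝ, g δt t ≤ 2 * R * Real.exp (t * Real.log γ) := by
    intro δt t
    have := min_le_left (2 * R) (Lr * (C * δt / K * Real.exp (K * t)))
    calc g δt t ≤ Real.exp (t * Real.log γ) * (2 * R) :=
          mul_le_mul_of_nonneg_left this (Real.exp_pos _).le
      _ = 2 * R * Real.exp (t * Real.log γ) := by ring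
  have hg_int : ∀ δt : ℝ, 0 < δt → IntegrableOn (g δt) (Set.Ioi 0) := by
    intro δt hδt
    refine hbound_int.mono' ((hg_cont δt).aestronglyMeasurable).restrict ?_
    filter_upwards with t
    rw [Real.norm_eq_abs, abs_of_nonneg (hg_nonneg δt hδt t)]
    exact hg_le δt t
  -- pointwise bound on the integrand
  have hf_le : ∀ δt : ℝ, 0 < δt → ∀ t : ℝ, 0 ≤ t →
      |Real.exp (t * Real.log γ) * (rt (st δt t) - rt (s t))| ≤ g δt t := by
    intro δt hδt t ht
    rw [abs_mul, abs_of_nonneg (Real.exp_pos _).le]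
    apply mul_le_mul_of_nonneg_left _ (Real.exp_pos _).le
    apply le_min
    · calc |rt (st δt t) - rt (s t)| ≤ |rt (st δt t)| + |rt (s t)| := abs_sub _ _
        _ ≤ R + R := add_le_add (hrbound _) (hrbound _)
        _ = 2 * R := by ring
    · have hlip := hrlip.dist_le_mul (st δt t) (s t)
      rw [Real.dist_eq] at hlip
      have hcoe : ((Real.toNNReal Lr : NNReal) : ℝ) = Lr := Real.coe_toNNReal _ hLr.le
      rw [hcoe] at hlip
      have hdist : dist (st δt t) (s t) ≤ C * δt / K * Real.exp (K * t) := by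
        rw [dist_comm, dist_eq_norm]
        exact hclose δt hδt t ht
      calc |rt (st δt t) - rt (s t)| ≤ Lr * dist (st δt t) (s t) := hlip
        _ ≤ Lr * (C * δt / K * Real.exp (K * t)) :=
            mul_le_mul_of_nonneg_left hdist hLr.le
  -- the majorant's integral tends to 0
  have hInt0 : Tendsto (fun δt : ℝ => ∫ t in Set.Ioi (0:ℝ), g δt t)
      (nhdsWithin 0 (Set.Ioi 0)) (nhds 0) := by
    have key := tendsto_integral_filter_of_dominated_convergence
      (μ := volume.restrict (Set.Ioi (0:ℝ))) (F := g) (f := fun _ : ℝ => (0:ℝ))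
      (l := nhdsWithin (0:ℝ) (Set.Ioi 0))
      (fun t : ℝ => 2 * R * Real.exp (t * Real.log γ)) ?_ ?_ ?_ ?_
    · simpa using key
    · filter_upwards with δt
      exact ((hg_cont δt).aestronglyMeasurable).restrict
    · filter_upwards [self_mem_nhdsWithin] with δt hδt
      filter_upwards with t
      rw [Real.norm_eq_abs, abs_of_nonneg (hg_nonneg δt hδt t)]
      exact hg_le δt t
    · exact hbound_int
    · filter_upwards with t
      have h1 : Tendsto (fun δt : ℝ => Lr * (C * δt / K * Real.exp (K * t)))
          (nhdsWithin 0 (Set.Ioi 0)) (nhds 0) := by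
        have hc : Continuous fun δt : ℝ => Lr * (C * δt / K * Real.exp (K * t)) := by
          have heq : (fun δt : ℝ => Lr * (C * δt / K * Real.exp (K * t)))
              = fun δt : ℝ => (Lr * C / K * Real.exp (K * t)) * δt := by
            funext δt; ring
          rw [heq]; exact continuous_const.mul continuous_id
        have := (hc.tendsto 0).mono_left
          (nhdsWithin_le_nhds : nhdsWithin (0:ℝ) (Set.Ioi 0) ≤ nhds 0)
        simpa using this
      have h2 : Tendsto (fun δt : ℝ => min (2 * R) (Lr * (C * δt / K * Real.exp (K * t))))
          (nhdsWithin 0 (Set.Ioi 0)) (nhds 0) := by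
        have := Tendsto.min (tendsto_const_nhds : Tendsto (fun _ : ℝ => 2 * R)
          (nhdsWithin (0:ℝ) (Set.Ioi 0)) (nhds (2 * R))) h1
        simpa [min_eq_right (by linarith : (0:ℝ) ≤ 2 * R)] using this
      have := h2.const_mul (Real.exp (t * Real.log γ))
      simpa using this
  -- squeeze
  have habs_le : ∀ δt : ℝ, 0 < δt →
      |∫ t in Set.Ioi (0:ℝ), Real.exp (t * Real.log γ) * (rt (st δt t) - rt (s t))| ≤
        ∫ t in Set.Ioi (0:ℝ), g δt t := by
    intro δt hδt
    have hstep1 : |∫ t in Set.Ioi (0:ℝ), Real.exp (t * Real.log γ) * (rt (st δt t) - rt (s t))|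
        ≤ ∫ t in Set.Ioi (0:ℝ),
            ‖Real.exp (t * Real.log γ) * (rt (st δt t) - rt (s t))‖ := by
      have := norm_integral_le_integral_norm
        (μ := volume.restrict (Set.Ioi (0:ℝ)))
        (fun t => Real.exp (t * Real.log γ) * (rt (st δt t) - rt (s t)))
      rwa [Real.norm_eq_abs] at this
    refine hstep1.trans ?_
    apply integral_mono_of_nonneg
    · filter_upwards with t; exact norm_nonneg _
    · exact hg_int δt hδt
    · rw [EventuallyLE, ae_restrict_iff' measurableSet_Ioi]
      filter_upwards with t ht
      rw [Real.norm_eq_abs]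
      exact hf_le δt hδt t (le_of_lt ht)
  apply squeeze_zero_norm' _ hInt0
  filter_upwards [self_mem_nhdsWithin] with δt hδt
  rw [Real.norm_eq_abs, abs_abs]
  exact habs_le δt hδt
end

section
/- Q-function collapse: Let Q_δt(s,a) = r(s,a)·δt + γ^δt · V_δt(s'), where s' = s + F(s,a) δt + o(δt), γ ∈ (0,1), r and F bounded, and V_δt is C¹ in s with derivatives uniformly bounded in s and δt, and V_δt uniformly bounded. Then Q_δt(s,a) = V_δt(s) + O(δt) as δt → 0; in particular, for any two actions a, a', Q_δt(s,a) − Q_δt(s,a') = O(δt). -/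
open Real Filter Asymptotics

/-! The one-step Bellman relation gives
`Q_δt(s,a) - V_δt(s) = r(s,a) δt + (γ^δt - 1) V_δt(s') + (V_δt(s') - V_δt(s))`.
The first term is `O(δt)` outright, the second because `γ^δt - 1 = O(δt)` and `V_δt` is uniformly
bounded, the third because `V_δt` is uniformly Lipschitz and the state moves by `s' - s = O(δt)`. -/

theorem isBigO_exp_mul_sub_one (c : ℝ) :
    (fun t : ℝ => exp (t * c) - 1) =O[nhds 0] fun t => t := by
  have h : HasDerivAt (fun t : ℝ => exp (t * c)) (exp (0 * c) * c) 0 :=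
    (hasDerivAt_mul_const c).exp
  simpa using h.isBigO_sub

theorem isBigO_apply_sub_apply_of_norm_fderiv_le {ι E F : Type*}
    [NormedAddCommGroup E] [NormedSpace ℝ E] [NormedAddCommGroup F] [NormedSpace ℝ F]
    {l : Filter ι} {f : ι → E → F} {C : ℝ}
    (hdiff : ∀ᶠ i in l, Differentiable ℝ (f i)) (hbound : ∀ᶠ i in l, ∀ z, ‖fderiv ℝ (f i) z‖ ≤ C)
    {x y : ι → E} {g : ι → ℝ} (hxy : (fun i => x i - y i) =O[l] g) :
    (fun i => f i (x i) - f i (y i)) =O[l] g := by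
  refine IsBigO.trans (IsBigO.of_bound C ?_) hxy
  filter_upwards [hdiff, hbound] with i hd hb
  exact convex_univ.norm_image_sub_le_of_norm_fderiv_le (fun z _ => hd z) (fun z _ => hb z)
    (Set.mem_univ _) (Set.mem_univ _)

theorem isBigO_sub_of_sub_sub_smul_isLittleO {E : Type*} [NormedAddCommGroup E] [NormedSpace ℝ E]
    {l : Filter ℝ} {x : ℝ → E} {x₀ v : E}
    (hx : (fun t => x t - x₀ - t • v) =o[l] fun t => t) :
    (fun t => x t - x₀) =O[l] fun t => t := by
  have hv : (fun t : ℝ => t • v) =O[l] fun t => t :=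
    .of_bound ‖v‖ (.of_forall fun t => by rw [norm_smul, mul_comm])
  simpa using hx.isBigO.add hv

theorem q_function_collapse_general
    {n : ℕ} {A : Type*} (γ : ℝ)
    (r : EuclideanSpace ℝ (Fin n) → A → ℝ)
    (F : EuclideanSpace ℝ (Fin n) → A → EuclideanSpace ℝ (Fin n))
    (V : ℝ → EuclideanSpace ℝ (Fin n) → ℝ)
    (hVC1 : ∀ δt : ℝ, 0 < δt → ContDiff ℝ 1 (V δt))
    (MV MD : ℝ)
    (hVb : ∀ δt : ℝ, 0 < δt → ∀ x, |V δt x| ≤ MV)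
    (hVd : ∀ δt : ℝ, 0 < δt → ∀ x, ‖fderiv ℝ (V δt) x‖ ≤ MD)
    (s' : ℝ → EuclideanSpace ℝ (Fin n) → A → EuclideanSpace ℝ (Fin n))
    (hs' : ∀ s a, (fun δt : ℝ => s' δt s a - s - δt • F s a)
      =o[nhdsWithin 0 (Set.Ioi 0)] (fun δt : ℝ => δt))
    (Q : ℝ → EuclideanSpace ℝ (Fin n) → A → ℝ)
    (hQ : ∀ δt : ℝ, 0 < δt → ∀ s a,
      Q δt s a = r s a * δt + Real.exp (δt * Real.log γ) * V δt (s' δt s a)) :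
    (∀ s a, (fun δt : ℝ => Q δt s a - V δt s)
      =O[nhdsWithin 0 (Set.Ioi 0)] (fun δt : ℝ => δt)) ∧
    (∀ s a a', (fun δt : ℝ => Q δt s a - Q δt s a')
      =O[nhdsWithin 0 (Set.Ioi 0)] (fun δt : ℝ => δt)) := by
  have hpos : ∀ᶠ δt in nhdsWithin (0 : ℝ) (Set.Ioi 0), 0 < δt := self_mem_nhdsWithin
  have collapse : ∀ s a, (fun δt : ℝ => Q δt s a - V δt s)
      =O[nhdsWithin 0 (Set.Ioi 0)] (fun δt : ℝ => δt) := by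
    intro s a
    have hreward := isBigO_const_mul_self (r s a) (fun δt : ℝ => δt) (nhdsWithin 0 (Set.Ioi 0))
    have hdiscount := (isBigO_exp_mul_sub_one (log γ)).mono (nhdsWithin_le_nhds (s := Set.Ioi 0))
    have hVbdd : (fun δt => V δt (s' δt s a)) =O[nhdsWithin 0 (Set.Ioi 0)] fun _ => (1 : ℝ) :=
      IsBigO.of_bound MV (hpos.mono fun δt hδt => by simpa only [norm_one, mul_one, Real.norm_eq_abs] using hVb δt hδt _)
    have hmove := isBigO_apply_sub_apply_of_norm_fderiv_le
      (hpos.mono fun δt hδt => (hVC1 δt hδt).differentiable one_ne_zero) (hpos.mono hVd)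
      (isBigO_sub_of_sub_sub_smul_isLittleO (hs' s a))
    have hdiscounted : (fun δt => (exp (δt * log γ) - 1) * V δt (s' δt s a))
        =O[nhdsWithin 0 (Set.Ioi 0)] fun δt => δt := by
      simpa only [mul_one] using hdiscount.mul hVbdd
    refine ((hreward.add hdiscounted).add hmove).congr' ?_ EventuallyEq.rfl
    filter_upwards [hpos] with δt hδt
    rw [hQ δt hδt]
    ring
  exact ⟨collapse, fun s a a' => by
    simpa only [sub_sub_sub_cancel_right] using (collapse s a).sub (collapse s a')⟩

/-- Collapse of the `Q`-function in near-continuous time: with one-step Bellman relation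
`Q_δt(s,a) = r(s,a) δt + γ^δt V_δt(s')`, `s' = s + F(s,a) δt + o(δt)`, bounded reward and
dynamics, and `V_δt` C¹ with value and derivative uniformly bounded in `s` and `δt`,
one has `Q_δt(s,a) = V_δt(s) + O(δt)`; in particular the gap between any two actions is
`O(δt)`. -/
theorem q_function_collapse
    {n : ℕ} {A : Type*} (γ : ℝ) (hγ0 : 0 < γ) (hγ1 : γ < 1)
    (r : EuclideanSpace ℝ (Fin n) → A → ℝ)
    (F : EuclideanSpace ℝ (Fin n) → A → EuclideanSpace ℝ (Fin n))
    (Mr MF : ℝ) (hr : ∀ s a, |r s a| ≤ Mr) (hF : ∀ s a, ‖F s a‖ ≤ MF)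
    (V : ℝ → EuclideanSpace ℝ (Fin n) → ℝ)
    (hVC1 : ∀ δt : ℝ, 0 < δt → ContDiff ℝ 1 (V δt))
    (MV MD : ℝ)
    (hVb : ∀ δt : ℝ, 0 < δt → ∀ x, |V δt x| ≤ MV)
    (hVd : ∀ δt : ℝ, 0 < δt → ∀ x, ‖fderiv ℝ (V δt) x‖ ≤ MD)
    (s' : ℝ → EuclideanSpace ℝ (Fin n) → A → EuclideanSpace ℝ (Fin n))
    (hs' : ∀ s a, (fun δt : ℝ => s' δt s a - s - δt • F s a)
      =o[nhdsWithin 0 (Set.Ioi 0)] (fun δt : ℝ => δt))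
    (Q : ℝ → EuclideanSpace ℝ (Fin n) → A → ℝ)
    (hQ : ∀ δt : ℝ, 0 < δt → ∀ s a,
      Q δt s a = r s a * δt + Real.exp (δt * Real.log γ) * V δt (s' δt s a)) :
    (∀ s a, (fun δt : ℝ => Q δt s a - V δt s)
      =O[nhdsWithin 0 (Set.Ioi 0)] (fun δt : ℝ => δt)) ∧
    (∀ s a a', (fun δt : ℝ => Q δt s a - Q δt s a')
      =O[nhdsWithin 0 (Set.Ioi 0)] (fun δt : ℝ => δt)) :=
  q_function_collapse_general γ r F V hVC1 MV MD hVb hVd s' hs' Q hQ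
end

section
/- Rescaled advantage limit: Under the hypotheses above plus convergence of V_δt(s) → V(s) and ∂_s V_δt(s) → ∂_s V(s), the rescaled advantage A_δt(s,a) := (Q_δt(s,a) − V_δt(s))/δt satisfies A_δt(s,a) = r(s,a) + log(γ) V_δt(s) + ∂_s V_δt(s)·F(s,a) + O(δt), and hence converges pointwise to A(s,a) = r(s,a) + log(γ) V(s) + ∇V(s)·F(s,a). -/
open Real Filter Asymptotics

/-- Second-order Taylor bound from a global Hessian bound. -/
lemma taylor_second_bound {n : ℕ} (f : EuclideanSpace ℝ (Fin n) → ℝ)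
    (hf : ContDiff ℝ 2 f) (MH : ℝ)
    (hH : ∀ x, ‖fderiv ℝ (fderiv ℝ f) x‖ ≤ MH)
    (x y : EuclideanSpace ℝ (Fin n)) :
    ‖f y - f x - fderiv ℝ f x (y - x)‖ ≤ MH * ‖y - x‖ * ‖y - x‖ := by
  have hd1 : Differentiable ℝ f := hf.differentiable (by norm_num)
  have hd2 : Differentiable ℝ (fderiv ℝ f) :=
    (hf.fderiv_right (m := 1) (by norm_num)).differentiable one_ne_zero
  have hMH0 : 0 ≤ MH := le_trans (by positivity) (hH x)
  have hlip : ∀ z, ‖fderiv ℝ f z - fderiv ℝ f x‖ ≤ MH * ‖z - x‖ := by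
    intro z
    exact Convex.norm_image_sub_le_of_norm_fderiv_le
      (fun w _ => (hd2 w)) (fun w _ => hH w) convex_univ (Set.mem_univ x) (Set.mem_univ z)
  have := Convex.norm_image_sub_le_of_norm_fderiv_le'
    (f := f) (φ := fderiv ℝ f x) (s := Metric.closedBall x ‖y - x‖)
    (C := MH * ‖y - x‖)
    (fun w _ => hd1 w)
    (fun w hw => by
      refine le_trans (hlip w) ?_
      have : ‖w - x‖ ≤ ‖y - x‖ := by
        simpa [dist_eq_norm] using hw
      exact mul_le_mul_of_nonneg_left this hMH0)
    (convex_closedBall _ _)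
    (Metric.mem_closedBall_self (norm_nonneg _))
    (Metric.mem_closedBall.2 (by rw [dist_eq_norm]))
  exact this

/-- Rescaled advantage limit: `A_δt(s,a) := (Q_δt(s,a) − V_δt(s))/δt` satisfies
`A_δt(s,a) = r(s,a) + log(γ) V_δt(s) + ∂_s V_δt(s)·F(s,a) + O(δt)` and converges
pointwise to `A(s,a) = r(s,a) + log(γ) V(s) + ∇V(s)·F(s,a)`. -/
theorem rescaled_advantage_limit
    {n : ℕ} {A : Type*} (γ : ℝ) (hγ0 : 0 < γ) (hγ1 : γ < 1)
    (r : EuclideanSpace ℝ (Fin n) → A → ℝ)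
    (F : EuclideanSpace ℝ (Fin n) → A → EuclideanSpace ℝ (Fin n))
    (Mr MF : ℝ) (hr : ∀ s a, |r s a| ≤ Mr) (hF : ∀ s a, ‖F s a‖ ≤ MF)
    (Vd : ℝ → EuclideanSpace ℝ (Fin n) → ℝ)
    (hVC : ∀ δt : ℝ, 0 < δt → ContDiff ℝ 2 (Vd δt))
    (MV MD MH : ℝ)
    (hVb : ∀ δt : ℝ, 0 < δt → ∀ x, |Vd δt x| ≤ MV)
    (hVd : ∀ δt : ℝ, 0 < δt → ∀ x, ‖fderiv ℝ (Vd δt) x‖ ≤ MD)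
    (hVh : ∀ δt : ℝ, 0 < δt → ∀ x, ‖fderiv ℝ (fderiv ℝ (Vd δt)) x‖ ≤ MH)
    (V : EuclideanSpace ℝ (Fin n) → ℝ) (hV : ContDiff ℝ 1 V)
    (hVconv : ∀ x, Tendsto (fun δt : ℝ => Vd δt x)
      (nhdsWithin 0 (Set.Ioi 0)) (nhds (V x)))
    (hDconv : ∀ x, Tendsto (fun δt : ℝ => fderiv ℝ (Vd δt) x)
      (nhdsWithin 0 (Set.Ioi 0)) (nhds (fderiv ℝ V x)))
    (s' : ℝ → EuclideanSpace ℝ (Fin n) → A → EuclideanSpace ℝ (Fin n))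
    (hs' : ∀ s a, (fun δt : ℝ => s' δt s a - s - δt • F s a)
      =O[nhdsWithin 0 (Set.Ioi 0)] (fun δt : ℝ => δt ^ 2))
    (Q : ℝ → EuclideanSpace ℝ (Fin n) → A → ℝ)
    (hQ : ∀ δt : ℝ, 0 < δt → ∀ s a,
      Q δt s a = r s a * δt + Real.exp (δt * Real.log γ) * Vd δt (s' δt s a)) :
    (∀ s a, (fun δt : ℝ => (Q δt s a - Vd δt s) / δt -
        (r s a + Real.log γ * Vd δt s + fderiv ℝ (Vd δt) s (F s a)))
      =O[nhdsWithin 0 (Set.Ioi 0)] (fun δt : ℝ => δt)) ∧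
    (∀ s a, Tendsto (fun δt : ℝ => (Q δt s a - Vd δt s) / δt)
      (nhdsWithin 0 (Set.Ioi 0))
      (nhds (r s a + Real.log γ * V s + fderiv ℝ V s (F s a)))) := by
  set l := nhdsWithin (0:ℝ) (Set.Ioi 0) with hl
  set L := Real.log γ with hLdef
  -- nonnegativity of the bounds
  have hMV0 : 0 ≤ MV := le_trans (abs_nonneg _) (hVb 1 one_pos 0)
  have hMD0 : 0 ≤ MD := le_trans (norm_nonneg _) (hVd 1 one_pos 0)
  have hMH0 : 0 ≤ MH := le_trans (by positivity) (hVh 1 one_pos 0)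
  have key : ∀ s a, (fun δt : ℝ => (Q δt s a - Vd δt s) / δt -
        (r s a + L * Vd δt s + fderiv ℝ (Vd δt) s (F s a)))
      =O[l] (fun δt : ℝ => δt) := by
    intro x0 a
    have hMF0 : 0 ≤ MF := le_trans (norm_nonneg _) (hF x0 a)
    obtain ⟨c, hc⟩ := (hs' x0 a).bound
    set c' : ℝ := max c 0 with hc'def
    have hc'0 : 0 ≤ c' := le_max_right _ _
    have hc2 : ∀ᶠ δt in l, ‖s' δt x0 a - x0 - δt • F x0 a‖ ≤ c' * δt ^ 2 := by
      filter_upwards [hc] with δt h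
      calc ‖s' δt x0 a - x0 - δt • F x0 a‖ ≤ c * ‖δt ^ 2‖ := h
        _ ≤ c' * δt ^ 2 := by
            rw [Real.norm_eq_abs, abs_of_nonneg (sq_nonneg δt)]
            exact mul_le_mul_of_nonneg_right (le_max_left _ _) (sq_nonneg δt)
    set K : ℝ := MF + c' with hKdef
    have hK0 : 0 ≤ K := add_nonneg hMF0 hc'0
    set C : ℝ := L ^ 2 * MV + |L| * MD * K + MH * K * K + MD * c' with hCdef
    have hpos : ∀ᶠ δt : ℝ in l, 0 < δt := self_mem_nhdsWithin
    have hsmall : ∀ᶠ δt : ℝ in l, |δt| < 1 / (|L| + 1) := by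
      have hε : (0:ℝ) < 1 / (|L| + 1) := by positivity
      apply eventually_nhdsWithin_of_eventually_nhds
      have : Metric.ball (0:ℝ) (1 / (|L| + 1)) ∈ nhds (0:ℝ) := Metric.ball_mem_nhds _ hε
      filter_upwards [this] with x hx
      simpa [Real.dist_eq] using hx
    rw [isBigO_iff]
    refine ⟨C, ?_⟩
    filter_upwards [hpos, hsmall, hc2] with δt hδ hδs hcs
    have hδ1 : δt ≤ 1 := by
      have h1 : (1:ℝ) / (|L| + 1) ≤ 1 := by
        rw [div_le_one (by positivity)]
        simpa using abs_nonneg L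
      have := hδs.le.trans h1
      rwa [abs_of_pos hδ] at this
    have hLsmall : |δt * L| ≤ 1 := by
      rw [abs_mul]
      calc |δt| * |L| ≤ (1 / (|L| + 1)) * (|L| + 1) := by
            apply mul_le_mul hδs.le (by linarith [abs_nonneg L]) (abs_nonneg L) (by positivity)
        _ = 1 := by field_simp
    set y := s' δt x0 a with hydef
    set D := fderiv ℝ (Vd δt) x0 with hDdef
    set e := Real.exp (δt * L) with hedef
    -- bound on ‖y - x0‖
    have hy : ‖y - x0‖ ≤ K * δt := by
      have h1 : ‖y - x0‖ ≤ ‖y - x0 - δt • F x0 a‖ + ‖δt • F x0 a‖ := by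
        have h := norm_add_le (y - x0 - δt • F x0 a) (δt • F x0 a)
        simpa using h
      calc ‖y - x0‖ ≤ ‖y - x0 - δt • F x0 a‖ + ‖δt • F x0 a‖ := h1
        _ ≤ c' * δt ^ 2 + δt * MF := by
            refine add_le_add hcs ?_
            rw [norm_smul, Real.norm_eq_abs, abs_of_pos hδ]
            exact mul_le_mul_of_nonneg_left (hF x0 a) hδ.le
        _ ≤ c' * δt + MF * δt := by
            have : c' * δt ^ 2 ≤ c' * δt := by
              rw [pow_two]
              calc c' * (δt * δt) = (c' * δt) * δt := by ring
                _ ≤ (c' * 1) * δt := by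
                    apply mul_le_mul_of_nonneg_right _ hδ.le
                    exact mul_le_mul_of_nonneg_left hδ1 hc'0
                _ = c' * δt := by ring
            linarith
        _ = K * δt := by rw [hKdef]; ring
    -- the four error terms
    have hT1 : |(e - 1 - δt * L) * Vd δt y| ≤ (δt * L) ^ 2 * MV := by
      rw [abs_mul]
      exact mul_le_mul (Real.abs_exp_sub_one_sub_id_le hLsmall) (hVb δt hδ y)
        (abs_nonneg _) (sq_nonneg _)
    have hVlip : |Vd δt y - Vd δt x0| ≤ MD * ‖y - x0‖ := by
      have := Convex.norm_image_sub_le_of_norm_fderiv_le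
        (f := Vd δt) (C := MD) (s := (Set.univ : Set (EuclideanSpace ℝ (Fin n))))
        (fun w _ => ((hVC δt hδ).differentiable (by norm_num)) w)
        (fun w _ => hVd δt hδ w) convex_univ (Set.mem_univ x0) (Set.mem_univ y)
      simpa [Real.norm_eq_abs] using this
    have hT2 : |δt * L * (Vd δt y - Vd δt x0)| ≤ δt * |L| * (MD * (K * δt)) := by
      rw [abs_mul, abs_mul, abs_of_pos hδ]
      apply mul_le_mul_of_nonneg_left _ (by positivity)
      exact hVlip.trans (mul_le_mul_of_nonneg_left hy hMD0)
    have hT3 : |Vd δt y - Vd δt x0 - D (y - x0)| ≤ MH * (K * δt) * (K * δt) := by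
      have := taylor_second_bound (Vd δt) (hVC δt hδ) MH (hVh δt hδ) x0 y
      rw [Real.norm_eq_abs] at this
      refine this.trans ?_
      have h1 : MH * ‖y - x0‖ * ‖y - x0‖ ≤ MH * (K * δt) * (K * δt) := by
        apply mul_le_mul _ hy (norm_nonneg _) (by positivity)
        exact mul_le_mul_of_nonneg_left hy hMH0
      exact h1
    have hT4 : |D (y - x0 - δt • F x0 a)| ≤ MD * (c' * δt ^ 2) := by
      calc |D (y - x0 - δt • F x0 a)| ≤ ‖D‖ * ‖y - x0 - δt • F x0 a‖ := by
            simpa [Real.norm_eq_abs] using D.le_opNorm (y - x0 - δt • F x0 a)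
        _ ≤ MD * (c' * δt ^ 2) := mul_le_mul (hVd δt hδ x0) hcs (norm_nonneg _) hMD0
    -- combine
    set N : ℝ := e * Vd δt y - Vd δt x0 - δt * L * Vd δt x0 - δt * D (F x0 a) with hNdef
    have hsplit : N = (e - 1 - δt * L) * Vd δt y + δt * L * (Vd δt y - Vd δt x0)
        + (Vd δt y - Vd δt x0 - D (y - x0)) + D (y - x0 - δt • F x0 a) := by
      have hlin : D (y - x0 - δt • F x0 a) = D (y - x0) - δt * D (F x0 a) := by
        rw [map_sub, map_smul]; simp
      rw [hNdef, hlin]; ring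
    have hN : |N| ≤ C * δt ^ 2 := by
      rw [hsplit]
      calc |(e - 1 - δt * L) * Vd δt y + δt * L * (Vd δt y - Vd δt x0)
            + (Vd δt y - Vd δt x0 - D (y - x0)) + D (y - x0 - δt • F x0 a)|
          ≤ |(e - 1 - δt * L) * Vd δt y| + |δt * L * (Vd δt y - Vd δt x0)|
            + |Vd δt y - Vd δt x0 - D (y - x0)| + |D (y - x0 - δt • F x0 a)| := by
            calc _ ≤ |(e - 1 - δt * L) * Vd δt y + δt * L * (Vd δt y - Vd δt x0)
                + (Vd δt y - Vd δt x0 - D (y - x0))| + |D (y - x0 - δt • F x0 a)| :=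
                abs_add_le _ _
              _ ≤ _ := by
                  gcongr
                  calc _ ≤ |(e - 1 - δt * L) * Vd δt y + δt * L * (Vd δt y - Vd δt x0)|
                      + |Vd δt y - Vd δt x0 - D (y - x0)| := abs_add_le _ _
                    _ ≤ _ := by gcongr; exact abs_add_le _ _
        _ ≤ (δt * L) ^ 2 * MV + δt * |L| * (MD * (K * δt))
            + MH * (K * δt) * (K * δt) + MD * (c' * δt ^ 2) := by
            exact add_le_add (add_le_add (add_le_add hT1 hT2) hT3) hT4
        _ = C * δt ^ 2 := by
            rw [hCdef]
            have : (δt * L) ^ 2 = δt ^ 2 * L ^ 2 := by ring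
            ring
    -- final bound
    have hexpr : (Q δt x0 a - Vd δt x0) / δt - (r x0 a + L * Vd δt x0 + D (F x0 a))
        = N / δt := by
      rw [hQ δt hδ x0 a, hNdef]
      field_simp
      ring
    rw [hexpr, Real.norm_eq_abs, Real.norm_eq_abs, abs_div, abs_of_pos hδ,
      div_le_iff₀ hδ]
    calc |N| ≤ C * δt ^ 2 := hN
      _ = C * δt * δt := by ring
  refine ⟨key, ?_⟩
  intro x0 a
  have h0 : Tendsto (fun δt : ℝ => (Q δt x0 a - Vd δt x0) / δt -
      (r x0 a + L * Vd δt x0 + fderiv ℝ (Vd δt) x0 (F x0 a))) l (nhds 0) :=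
    (key x0 a).trans_tendsto (tendsto_id.mono_left nhdsWithin_le_nhds)
  have hD' : Tendsto (fun δt : ℝ => fderiv ℝ (Vd δt) x0 (F x0 a)) l
      (nhds (fderiv ℝ V x0 (F x0 a))) := by
    have hcont : Continuous (fun φ : EuclideanSpace ℝ (Fin n) →L[ℝ] ℝ => φ (F x0 a)) :=
      (ContinuousLinearMap.apply ℝ ℝ (F x0 a)).continuous
    exact (hcont.tendsto _).comp (hDconv x0)
  have hg : Tendsto (fun δt : ℝ => r x0 a + L * Vd δt x0 + fderiv ℝ (Vd δt) x0 (F x0 a)) l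
      (nhds (r x0 a + L * V x0 + fderiv ℝ V x0 (F x0 a))) :=
    (tendsto_const_nhds.add ((tendsto_const_nhds.mul (hVconv x0)))).add hD'
  have := h0.add hg
  simp only [zero_add] at this
  convert this using 2 with δt
  ring
end

section
/- Continuous-time policy improvement: Let π, π' be policies with V^π, V^{π'} continuously differentiable, s ↦ r(s,π(s)) and s ↦ r(s,π'(s)) continuous, and define A^π(s,a) = r(s,a) + log(γ) V^π(s) + ∇V^π(s)·F(s,a). If A^π(s, π'(s)) ≥ 0 for all s, then V^π(s) ≤ V^{π'}(s) for all s. Moreover, if V^{π'}(s) > V^π(s) for some s, then there exists s' with A^π(s', π'(s')) > 0. -/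
/-!
Along the trajectory `x` of `π'` from `s` consider the bootstrapped return
`g T = ∫₀ᵀ γᵗ r(x t, π'(x t)) dt + γᵀ V^π(x T)`.
It starts at `V^π(s)`, tends to `V^{π'}(s)`, and by the chain rule its derivative is
`γᵀ A^π(x T, π'(x T))`. A sign condition on the advantage, in either direction, therefore
makes `g` monotone on `[0, ∞)`, which compares its two ends.
-/

open Real Filter Set Topology intervalIntegral

theorem le_of_tendsto_of_hasDerivAt_nonneg {g g' : ℝ → ℝ} {a l : ℝ}
    (hg : ContinuousOn g (Ici a)) (hderiv : ∀ t, a < t → HasDerivAt g (g' t) t)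
    (hnonneg : ∀ t, a < t → 0 ≤ g' t) (hlim : Tendsto g atTop (𝓝 l)) : g a ≤ l := by
  have hmono : MonotoneOn g (Ici a) :=
    monotoneOn_of_hasDerivWithinAt_nonneg (convex_Ici a) hg
      (fun t ht => (hderiv t (by rwa [interior_Ici] at ht)).hasDerivWithinAt)
      (fun t ht => hnonneg t (by rwa [interior_Ici] at ht))
  exact ge_of_tendsto hlim <| (eventually_ge_atTop a).mono fun T hT =>
    hmono self_mem_Ici hT hT

theorem ge_of_tendsto_of_hasDerivAt_nonpos {g g' : ℝ → ℝ} {a l : ℝ}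
    (hg : ContinuousOn g (Ici a)) (hderiv : ∀ t, a < t → HasDerivAt g (g' t) t)
    (hnonpos : ∀ t, a < t → g' t ≤ 0) (hlim : Tendsto g atTop (𝓝 l)) : l ≤ g a :=
  neg_le_neg_iff.mp <| le_of_tendsto_of_hasDerivAt_nonneg (g := fun t => -g t) hg.neg
    (fun t ht => (hderiv t ht).neg) (fun t ht => neg_nonneg.mpr (hnonpos t ht)) hlim.neg

theorem HasDerivAt.comp_max_zero {E : Type*} [NormedAddCommGroup E] [NormedSpace ℝ E]
    {x : ℝ → E} {v : E} {t : ℝ} (h : HasDerivAt x v t) (ht : 0 < t) :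
    HasDerivAt (fun s => x (max 0 s)) v t :=
  h.congr_of_eventuallyEq <| by
    filter_upwards [Ioi_mem_nhds ht] with s hs
    rw [max_eq_right hs.le]

section BootstrappedReturn

variable {E : Type*}

/-- `exp (t * L)` stands for `γ ^ t`, with `L = log γ`. -/
noncomputable def bootstrappedReturn (L : ℝ) (ρ V : E → ℝ) (x : ℝ → E) (T : ℝ) : ℝ :=
  (∫ t in (0:ℝ)..T, exp (t * L) * ρ (x t)) + exp (T * L) * V (x T)

variable {L : ℝ} {ρ V : E → ℝ} {x y : ℝ → E}

theorem bootstrappedReturn_zero : bootstrappedReturn L ρ V x 0 = V (x 0) := by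
  simp [bootstrappedReturn]

theorem bootstrappedReturn_congr (h : EqOn x y (Ici 0)) {T : ℝ} (hT : 0 ≤ T) :
    bootstrappedReturn L ρ V x T = bootstrappedReturn L ρ V y T := by
  have hint : (∫ t in (0:ℝ)..T, exp (t * L) * ρ (x t)) =
      ∫ t in (0:ℝ)..T, exp (t * L) * ρ (y t) :=
    integral_congr fun t ht => by
      rw [uIcc_of_le hT] at ht
      simp only [h ht.1]
  rw [bootstrappedReturn, bootstrappedReturn, hint, h (mem_Ici.mpr hT)]

theorem continuous_bootstrappedReturn [TopologicalSpace E] (hρx : Continuous fun t => ρ (x t))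
    (hVx : Continuous fun t => V (x t)) : Continuous (bootstrappedReturn L ρ V x) :=
  have hexp : Continuous fun t => exp (t * L) := by fun_prop
  (continuous_primitive (fun a b => (hexp.mul hρx).intervalIntegrable a b) 0).add (hexp.mul hVx)

theorem hasDerivAt_bootstrappedReturn [NormedAddCommGroup E] [NormedSpace ℝ E]
    (hρx : Continuous fun t => ρ (x t)) {v : E} {t : ℝ} (hx : HasDerivAt x v t)
    (hV : DifferentiableAt ℝ V (x t)) :
    HasDerivAt (bootstrappedReturn L ρ V x)
      (exp (t * L) * (ρ (x t) + L * V (x t) + fderiv ℝ V (x t) v)) t := by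
  have hint : HasDerivAt (fun T => ∫ s in (0:ℝ)..T, exp (s * L) * ρ (x s))
      (exp (t * L) * ρ (x t)) t :=
    (((continuous_exp.comp (continuous_id.mul continuous_const)).mul hρx).integral_hasStrictDerivAt
      0 t).hasDerivAt
  have hexp : HasDerivAt (fun T => exp (T * L)) (exp (t * L) * L) t := by
    simpa using ((hasDerivAt_id t).mul_const L).exp
  have hVx : HasDerivAt (fun T => V (x T)) (fderiv ℝ V (x t) v) t :=
    hV.hasFDerivAt.comp_hasDerivAt t hx
  refine (hint.add (hexp.mul hVx)).congr_deriv ?_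
  ring

end BootstrappedReturn

theorem continuous_time_policy_improvement_general
    {n : ℕ} {A : Type*} (γ : ℝ)
    (F : EuclideanSpace ℝ (Fin n) → A → EuclideanSpace ℝ (Fin n))
    (r : EuclideanSpace ℝ (Fin n) → A → ℝ)
    (pol' : EuclideanSpace ℝ (Fin n) → A)
    (Vpol Vpol' : EuclideanSpace ℝ (Fin n) → ℝ)
    (hVpol : ContDiff ℝ 1 Vpol)
    (hrcont' : Continuous (fun s => r s (pol' s)))
    -- trajectories under π' from any initial state
    (u : EuclideanSpace ℝ (Fin n) → ℝ → EuclideanSpace ℝ (Fin n))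
    (hu0 : ∀ s, u s 0 = s)
    (hu : ∀ s, ∀ t : ℝ, 0 ≤ t → HasDerivAt (u s) (F (u s t) (pol' (u s t))) t)
    -- V^{π'} is the limit of the discounted partial return plus discounted value
    (hlim : ∀ s, Tendsto (fun T : ℝ =>
        (∫ t in (0:ℝ)..T, Real.exp (t * Real.log γ) * r (u s t) (pol' (u s t)))
        + Real.exp (T * Real.log γ) * Vpol (u s T)) atTop (nhds (Vpol' s))) :
    ((∀ s, 0 ≤ r s (pol' s) + Real.log γ * Vpol s
        + fderiv ℝ Vpol s (F s (pol' s))) →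
      ∀ s, Vpol s ≤ Vpol' s) ∧
    ((∃ s, Vpol s < Vpol' s) →
      ∃ s', 0 < r s' (pol' s') + Real.log γ * Vpol s'
        + fderiv ℝ Vpol s' (F s' (pol' s'))) := by
  -- `u s` is only differentiable on `[0, ∞)`; freezing it at `s` for `t < 0` makes it continuous.
  let x s t := u s (max 0 t)
  let g s := bootstrappedReturn (log γ) (fun s => r s (pol' s)) Vpol (x s)
  have hx s : Continuous (x s) :=
    ContinuousOn.comp_continuous (fun t ht => (hu s t ht).continuousAt.continuousWithinAt)
      (continuous_const.max continuous_id) fun t => le_max_left 0 t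
  have hg s : Continuous (g s) :=
    continuous_bootstrappedReturn (hrcont'.comp (hx s)) (hVpol.continuous.comp (hx s))
  have hg0 s : g s 0 = Vpol s := by simp [g, x, bootstrappedReturn_zero, hu0]
  have hxderiv s t (ht : 0 < t) : HasDerivAt (x s) (F (x s t) (pol' (x s t))) t := by
    simpa only [x, max_eq_right ht.le] using (hu s t ht.le).comp_max_zero ht
  have hderiv s t (ht : 0 < t) :=
    hasDerivAt_bootstrappedReturn (L := log γ) (ρ := fun s => r s (pol' s)) (hrcont'.comp (hx s))
      (hxderiv s t ht) (hVpol.differentiable one_ne_zero (x s t))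
  have hglim s : Tendsto (g s) atTop (𝓝 (Vpol' s)) :=
    (hlim s).congr' <| (eventually_ge_atTop 0).mono fun T hT =>
      bootstrappedReturn_congr (fun t ht => (congrArg (u s) (max_eq_right ht)).symm) hT
  refine ⟨fun hA s => ?_, fun ⟨s, hs⟩ => ?_⟩
  · exact hg0 s ▸ le_of_tendsto_of_hasDerivAt_nonneg (hg s).continuousOn (hderiv s)
      (fun t _ => mul_nonneg (exp_pos _).le (hA (x s t))) (hglim s)
  · by_contra! hA
    exact hs.not_ge <| hg0 s ▸ ge_of_tendsto_of_hasDerivAt_nonpos (hg s).continuousOn (hderiv s)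
      (fun t _ => mul_nonpos_of_nonneg_of_nonpos (exp_pos _).le (hA (x s t))) (hglim s)

/-- Continuous-time policy improvement: if the continuous-time advantage of `π` evaluated
at the actions of `π'` is everywhere nonnegative, then `π'` dominates `π`; and if `π'`
strictly improves on `π` somewhere, then the advantage is strictly positive somewhere. -/
theorem continuous_time_policy_improvement
    {n : ℕ} {A : Type*} (γ : ℝ) (hγ0 : 0 < γ) (hγ1 : γ < 1)
    (F : EuclideanSpace ℝ (Fin n) → A → EuclideanSpace ℝ (Fin n))
    (r : EuclideanSpace ℝ (Fin n) → A → ℝ)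
    (pol pol' : EuclideanSpace ℝ (Fin n) → A)
    (Vpol Vpol' : EuclideanSpace ℝ (Fin n) → ℝ)
    (hVpol : ContDiff ℝ 1 Vpol) (hVpol' : ContDiff ℝ 1 Vpol')
    (hrcont : Continuous (fun s => r s (pol s)))
    (hrcont' : Continuous (fun s => r s (pol' s)))
    -- trajectories under π' from any initial state
    (u : EuclideanSpace ℝ (Fin n) → ℝ → EuclideanSpace ℝ (Fin n))
    (hu0 : ∀ s, u s 0 = s)
    (hu : ∀ s, ∀ t : ℝ, 0 ≤ t → HasDerivAt (u s) (F (u s t) (pol' (u s t))) t)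
    -- HJB identity for V^π along π
    (hHJB : ∀ s, r s (pol s) + fderiv ℝ Vpol s (F s (pol s))
      + Real.log γ * Vpol s = 0)
    -- V^{π'} is the limit of the discounted partial return plus discounted value
    (hlim : ∀ s, Tendsto (fun T : ℝ =>
        (∫ t in (0:ℝ)..T, Real.exp (t * Real.log γ) * r (u s t) (pol' (u s t)))
        + Real.exp (T * Real.log γ) * Vpol (u s T)) atTop (nhds (Vpol' s))) :
    ((∀ s, 0 ≤ r s (pol' s) + Real.log γ * Vpol s
        + fderiv ℝ Vpol s (F s (pol' s))) →
      ∀ s, Vpol s ≤ Vpol' s) ∧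
    ((∃ s, Vpol s < Vpol' s) →
      ∃ s', 0 < r s' (pol' s') + Real.log γ * Vpol s'
        + fderiv ℝ Vpol s' (F s' (pol' s'))) :=
  continuous_time_policy_improvement_general γ F r pol' Vpol Vpol' hVpol hrcont' u hu0 hu hlim
end

section
/- Let B(T) = ∫_0^T γ^t r(s_t, π'(s_t)) dt + γ^T V^π(s_T) where s_t follows ds/dt = F(s_t, π'(s_t)). Then B is differentiable with B'(T) = γ^T · A^π(s_T, π'(s_T)), where A^π(s,a) = r(s,a) + ∇V^π(s)·F(s,a) + log(γ) V^π(s). -/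
/-!
Write `γ^t = exp (t log γ)`. The integral term has derivative `γ^T r(s_T, π'(s_T))` by the
fundamental theorem of calculus, and the product rule applied to `γ^T · V^π(s_T)` gives
`γ^T log γ · V^π(s_T) + γ^T ∇V^π(s_T)·F(s_T, π'(s_T))`, the chain rule along the ODE supplying
the second summand.
-/

theorem hasDerivAt_exp_mul_const (c T : ℝ) :
    HasDerivAt (fun t : ℝ => Real.exp (t * c)) (Real.exp (T * c) * c) T := by
  simpa using ((hasDerivAt_id T).mul_const c).exp

theorem hasDerivAt_discounted_return {ρ v : ℝ → ℝ} {v' c T : ℝ} (hρ : Continuous ρ)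
    (hv : HasDerivAt v v' T) :
    HasDerivAt (fun T : ℝ => (∫ t in (0 : ℝ)..T, Real.exp (t * c) * ρ t) + Real.exp (T * c) * v T)
      (Real.exp (T * c) * (ρ T + v' + c * v T)) T := by
  have hintegrand : Continuous (fun t : ℝ => Real.exp (t * c) * ρ t) := by fun_prop
  have hintegral := (hintegrand.integral_hasStrictDerivAt 0 T).hasDerivAt
  have hterminal := (hasDerivAt_exp_mul_const c T).mul hv
  exact (hintegral.add hterminal).congr_deriv (by ring)

theorem derivative_of_B_general
    {n : ℕ} {A : Type*} (γ : ℝ)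
    (F : EuclideanSpace ℝ (Fin n) → A → EuclideanSpace ℝ (Fin n))
    (r : EuclideanSpace ℝ (Fin n) → A → ℝ)
    (pol' : EuclideanSpace ℝ (Fin n) → A)
    (Vpol : EuclideanSpace ℝ (Fin n) → ℝ) (hVpol : ContDiff ℝ 1 Vpol)
    (s : ℝ → EuclideanSpace ℝ (Fin n))
    (hs : ∀ t : ℝ, HasDerivAt s (F (s t) (pol' (s t))) t)
    (hrcont : Continuous (fun t : ℝ => r (s t) (pol' (s t)))) :
    ∀ T : ℝ, HasDerivAt (fun T : ℝ =>
        (∫ t in (0:ℝ)..T, Real.exp (t * Real.log γ) * r (s t) (pol' (s t)))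
        + Real.exp (T * Real.log γ) * Vpol (s T))
      (Real.exp (T * Real.log γ) *
        (r (s T) (pol' (s T)) + fderiv ℝ Vpol (s T) (F (s T) (pol' (s T)))
          + Real.log γ * Vpol (s T))) T := by
  intro T
  have hvalue : HasDerivAt (fun t => Vpol (s t)) (fderiv ℝ Vpol (s T) (F (s T) (pol' (s T)))) T :=
    (hVpol.differentiable one_ne_zero (s T)).hasFDerivAt.comp_hasDerivAt T (hs T)
  exact hasDerivAt_discounted_return hrcont hvalue

/-- Derivative of `B(T) = ∫_0^T γ^t r(s_t, π'(s_t)) dt + γ^T V^π(s_T)`: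
`B'(T) = γ^T A^π(s_T, π'(s_T))` with
`A^π(s,a) = r(s,a) + ∇V^π(s)·F(s,a) + log(γ) V^π(s)`. -/
theorem derivative_of_B
    {n : ℕ} {A : Type*} (γ : ℝ) (hγ0 : 0 < γ) (hγ1 : γ < 1)
    (F : EuclideanSpace ℝ (Fin n) → A → EuclideanSpace ℝ (Fin n))
    (r : EuclideanSpace ℝ (Fin n) → A → ℝ)
    (pol' : EuclideanSpace ℝ (Fin n) → A)
    (Vpol : EuclideanSpace ℝ (Fin n) → ℝ) (hVpol : ContDiff ℝ 1 Vpol)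
    (s : ℝ → EuclideanSpace ℝ (Fin n))
    (hs : ∀ t : ℝ, HasDerivAt s (F (s t) (pol' (s t))) t)
    (hrcont : Continuous (fun t : ℝ => r (s t) (pol' (s t)))) :
    ∀ T : ℝ, HasDerivAt (fun T : ℝ =>
        (∫ t in (0:ℝ)..T, Real.exp (t * Real.log γ) * r (s t) (pol' (s t)))
        + Real.exp (T * Real.log γ) * Vpol (s T))
      (Real.exp (T * Real.log γ) *
        (r (s T) (pol' (s T)) + fderiv ℝ Vpol (s T) (F (s T) (pol' (s T)))
          + Real.log γ * Vpol (s T))) T :=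
  derivative_of_B_general γ F r pol' Vpol hVpol s hs hrcont
end

section
/- Value function convergence: Under the hypotheses of the trajectory-convergence lemma, with r bounded and s ↦ r(s, π(s)) L_r-Lipschitz and γ ∈ (0,1), the discretized value V^π_δt(s) := Σ_{k=0}^∞ γ^{kδt} r(s_δt^k, π(s_δt^k)) δt converges to the continuous value V^π(s) := ∫_0^∞ γ^t r(s_t, π(s_t)) dt as δt → 0, for every initial state s. -/
/-! Freezing the action for a step of length `δ` perturbs the vector field by `O(δ)`, so Grönwall's
inequality bounds the one-step error by `e^{Kδ} (e_k + O(δ²))`; unrolling gives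
`‖s(kδ) - s_δ^k‖ = O(kδ² e^{Kkδ})`, hence `s_δ^{⌊t/δ⌋} → s_t` for each fixed `t`. The discounted
sum is exactly the integral over `t > 0` of the step function `γ^{⌊t/δ⌋δ} r(s_δ^{⌊t/δ⌋})`, which
converges pointwise to `γ^t r(s_t)` and, for `δ < 1`, is dominated by `Mr γ^{t-1}`; dominated
convergence concludes. -/

open Real Filter MeasureTheory Set Topology NNReal

lemma gronwallBound_le_exp_mul_add {δ ε x : ℝ} {K : ℝ≥0} (hε : 0 ≤ ε) :
    gronwallBound δ K ε x ≤ exp (K * x) * (δ + ε * x) := by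
  rcases eq_or_ne K 0 with rfl | hK
  · simp [gronwallBound_K0]
  have hKpos : (0 : ℝ) < K := by positivity
  -- `exp y - 1 ≤ y * exp y` is `1 - y ≤ exp (-y)` multiplied by `exp y`
  have hexp : exp (K * x) - 1 ≤ K * x * exp (K * x) := by
    have := mul_le_mul_of_nonneg_left (one_sub_le_exp_neg (K * x)) (exp_pos (K * x)).le
    rw [← exp_add, add_neg_cancel, exp_zero] at this
    linarith
  have hdiv : (exp (K * x) - 1) / K ≤ x * exp (K * x) := by
    rw [div_le_iff₀ hKpos]; linarith
  rw [gronwallBound_of_K_ne_0 (NNReal.coe_ne_zero.2 hK)]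
  calc δ * exp (K * x) + ε / K * (exp (K * x) - 1)
      = δ * exp (K * x) + ε * ((exp (K * x) - 1) / K) := by ring
    _ ≤ δ * exp (K * x) + ε * (x * exp (K * x)) := by gcongr
    _ = exp (K * x) * (δ + ε * x) := by ring

lemma le_nat_mul_mul_pow_of_le_mul_add {e : ℕ → ℝ} {a c : ℝ} (h0 : e 0 ≤ 0) (ha : 1 ≤ a)
    (hc : 0 ≤ c) (hstep : ∀ k, e (k + 1) ≤ a * (e k + c)) (k : ℕ) : e k ≤ k * c * a ^ k := by
  induction k with
  | zero => simpa using h0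
  | succ k ih =>
    have hpow : a ≤ a ^ (k + 1) := le_self_pow₀ ha k.succ_ne_zero
    calc e (k + 1) ≤ a * (k * c * a ^ k + c) :=
          (hstep k).trans (mul_le_mul_of_nonneg_left (by linarith) (by linarith))
      _ = k * c * a ^ (k + 1) + c * a := by ring
      _ ≤ k * c * a ^ (k + 1) + c * a ^ (k + 1) := by gcongr
      _ = ((k + 1 : ℕ) : ℝ) * c * a ^ (k + 1) := by push_cast; ring

namespace Nat

lemma floor_div_mul_le {t δ : ℝ} (ht : 0 ≤ t) (hδ : 0 < δ) : (⌊t / δ⌋₊ : ℝ) * δ ≤ t :=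
  (le_div_iff₀ hδ).1 (Nat.floor_le (div_nonneg ht hδ.le))

lemma lt_floor_div_add_one_mul (t : ℝ) {δ : ℝ} (hδ : 0 < δ) : t < (⌊t / δ⌋₊ + 1) * δ :=
  (div_lt_iff₀ hδ).1 (Nat.lt_floor_add_one _)

end Nat

lemma tendsto_floor_div_mul_nhdsGT {t : ℝ} (ht : 0 ≤ t) :
    Tendsto (fun δ : ℝ => (⌊t / δ⌋₊ : ℝ) * δ) (𝓝[>] 0) (𝓝 t) := by
  have hlow : Tendsto (fun δ : ℝ => t - δ) (𝓝[>] 0) (𝓝 t) := by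
    simpa using ((continuous_sub_left t).tendsto 0).mono_left nhdsWithin_le_nhds
  refine tendsto_of_tendsto_of_tendsto_of_le_of_le' hlow tendsto_const_nhds ?_ ?_ <;>
    filter_upwards [self_mem_nhdsWithin] with δ (hδ : 0 < δ)
  · linarith [Nat.lt_floor_div_add_one_mul t hδ]
  · exact Nat.floor_div_mul_le ht hδ

lemma tsum_mul_eq_integral_floor_div {δ : ℝ} (hδ : 0 < δ) {g : ℕ → ℝ}
    (hg : IntegrableOn (fun t => g ⌊t / δ⌋₊) (Ioi 0)) :
    ∑' k, g k * δ = ∫ t in Ioi 0, g ⌊t / δ⌋₊ := by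
  set S : ℕ → Set ℝ := fun k => Ico (k * δ) ((k + 1) * δ)
  have hfloor : ∀ k, ∀ t ∈ S k, ⌊t / δ⌋₊ = k := fun k t ht =>
    (Nat.floor_eq_iff (div_nonneg ((by positivity : (0:ℝ) ≤ k * δ).trans ht.1) hδ.le)).2
      ⟨(le_div_iff₀ hδ).2 ht.1, (div_lt_iff₀ hδ).2 ht.2⟩
  have hU : ⋃ k, S k = Ici 0 := by
    refine Subset.antisymm (iUnion_subset fun k t ht => (by positivity : (0:ℝ) ≤ k * δ).trans ht.1)
      fun t (ht : 0 ≤ t) => mem_iUnion.2 ⟨⌊t / δ⌋₊, Nat.floor_div_mul_le ht hδ,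
        Nat.lt_floor_div_add_one_mul t hδ⟩
  have hdisj : Pairwise (Function.onFun Disjoint S) := fun i j hij =>
    Set.disjoint_left.2 fun t hi hj => hij ((hfloor i t hi).symm.trans (hfloor j t hj))
  have hpiece : ∀ k, ∫ t in S k, g ⌊t / δ⌋₊ = g k * δ := fun k => by
    rw [setIntegral_congr_fun measurableSet_Ico fun t ht => congrArg g (hfloor k t ht),
      setIntegral_const, Real.volume_real_Ico_of_le (by gcongr; linarith), smul_eq_mul]
    ring
  have hsum := hasSum_integral_iUnion (s := S) (fun k => measurableSet_Ico) hdisj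
    (hU ▸ (integrableOn_Ici_iff_integrableOn_Ioi).2 hg)
  simp only [hpiece, hU, integral_Ici_eq_integral_Ioi] at hsum
  exact hsum.tsum_eq

lemma tendsto_tsum_mul_of_dominated {g : ℝ → ℕ → ℝ} {f bound : ℝ → ℝ}
    (hbound : IntegrableOn bound (Ioi 0))
    (hdom : ∀ᶠ δ in 𝓝[>] 0, ∀ t, 0 < t → |g δ ⌊t / δ⌋₊| ≤ bound t)
    (hlim : ∀ t, 0 < t → Tendsto (fun δ => g δ ⌊t / δ⌋₊) (𝓝[>] 0) (𝓝 (f t))) :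
    Tendsto (fun δ => ∑' k, g δ k * δ) (𝓝[>] 0) (𝓝 (∫ t in Ioi 0, f t)) := by
  have hmeas : ∀ δ, AEStronglyMeasurable (fun t : ℝ => g δ ⌊t / δ⌋₊) (volume.restrict (Ioi 0)) :=
    fun δ => ((measurable_from_nat (f := g δ)).comp
      (Nat.measurable_floor.comp (measurable_id.div_const δ))).aestronglyMeasurable
  have hdom' : ∀ᶠ δ in 𝓝[>] 0, ∀ᵐ t ∂volume.restrict (Ioi 0), ‖g δ ⌊t / δ⌋₊‖ ≤ bound t := by
    filter_upwards [hdom] with δ hδ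
    exact (ae_restrict_iff' measurableSet_Ioi).2 (ae_of_all _ hδ)
  have hconv := tendsto_integral_filter_of_dominated_convergence bound (Eventually.of_forall hmeas)
    hdom' hbound ((ae_restrict_iff' measurableSet_Ioi).2 (ae_of_all _ hlim))
  refine hconv.congr' ?_
  filter_upwards [hdom', self_mem_nhdsWithin] with δ hδ (hδpos : 0 < δ)
  exact (tsum_mul_eq_integral_floor_div hδpos
    (Integrable.mono' hbound (hmeas δ) hδ)).symm

section FrozenAction

variable {E A : Type*} [NormedAddCommGroup E] [NormedSpace ℝ E] {F : E → A → E} {pol : E → A}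
  {K : ℝ≥0} {M : ℝ}

lemma norm_sub_le_of_hasDerivAt_of_norm_le_s18 {u w : ℝ → E}
    (hu : ∀ t, 0 ≤ t → HasDerivAt u (w t) t) (hw : ∀ t, 0 ≤ t → ‖w t‖ ≤ M)
    {t₁ t₂ : ℝ} (ht₁ : 0 ≤ t₁) (ht₁₂ : t₁ ≤ t₂) : ‖u t₂ - u t₁‖ ≤ M * (t₂ - t₁) := by
  have := (convex_Ici 0).norm_image_sub_le_of_norm_hasDerivWithin_le
    (fun t ht => (hu t ht).hasDerivWithinAt) hw ht₁ (ht₁.trans ht₁₂)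
  rwa [Real.norm_of_nonneg (sub_nonneg.2 ht₁₂)] at this

lemma norm_frozen_sub_le (hFbound : ∀ x a, ‖F x a‖ ≤ M) (hFlip : ∀ a, LipschitzWith K (F · a))
    (hFpol : LipschitzWith K fun x => F x (pol x)) {u : ℝ → E}
    (hu : ∀ t, 0 ≤ t → HasDerivAt u (F (u t) (pol (u 0))) t) {t : ℝ} (ht : 0 ≤ t) :
    ‖F (u t) (pol (u 0)) - F (u t) (pol (u t))‖ ≤ 2 * K * M * t := by
  have hspeed : ‖u t - u 0‖ ≤ M * t := by
    simpa using norm_sub_le_of_hasDerivAt_of_norm_le_s18 hu (fun _ _ => hFbound _ _) le_rfl ht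
  calc ‖F (u t) (pol (u 0)) - F (u t) (pol (u t))‖
      ≤ ‖F (u t) (pol (u 0)) - F (u 0) (pol (u 0))‖ + ‖F (u 0) (pol (u 0)) - F (u t) (pol (u t))‖ :=
        norm_sub_le_norm_sub_add_norm_sub _ _ _
    _ ≤ K * ‖u t - u 0‖ + K * ‖u 0 - u t‖ :=
        add_le_add ((hFlip _).norm_sub_le _ _) (hFpol.norm_sub_le _ _)
    _ ≤ 2 * K * M * t := by
        rw [norm_sub_rev (u 0)]
        nlinarith [mul_le_mul_of_nonneg_left hspeed K.2]

lemma norm_sub_frozen_step_le (hFbound : ∀ x a, ‖F x a‖ ≤ M)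
    (hFlip : ∀ a, LipschitzWith K (F · a)) (hFpol : LipschitzWith K fun x => F x (pol x))
    {s u : ℝ → E} (hs : ∀ t, 0 ≤ t → HasDerivAt s (F (s t) (pol (s t))) t)
    (hu : ∀ t, 0 ≤ t → HasDerivAt u (F (u t) (pol (u 0))) t) {t₀ δ : ℝ} (ht₀ : 0 ≤ t₀)
    (hδ : 0 ≤ δ) :
    ‖s (t₀ + δ) - u δ‖ ≤ exp (K * δ) * (‖s t₀ - u 0‖ + 2 * K * M * δ * δ) := by
  have hM : 0 ≤ M := (norm_nonneg _).trans (hFbound (u 0) (pol (u 0)))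
  have hs' : ∀ t, 0 ≤ t → HasDerivAt (fun τ => s (t₀ + τ)) (F (s (t₀ + t)) (pol (s (t₀ + t)))) t :=
    fun t ht => (hs _ (add_nonneg ht₀ ht)).comp_const_add t₀ t
  -- `s (t₀ + ·)` solves the closed-loop ODE exactly, `u` up to an error `2KMδ` on `[0, δ]`
  have := dist_le_of_approx_trajectories_ODE (v := fun _ x => F x (pol x)) (fun _ => hFpol)
    (fun t ht => (hs' t ht.1).continuousAt.continuousWithinAt)
    (fun t ht => (hs' t ht.1).hasDerivWithinAt) (fun _ _ => (dist_self _).le)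
    (fun t ht => (hu t ht.1).continuousAt.continuousWithinAt)
    (fun t ht => (hu t ht.1).hasDerivWithinAt)
    (fun t ht => (dist_eq_norm _ _).trans_le <| (norm_frozen_sub_le hFbound hFlip hFpol hu ht.1).trans
      (mul_le_mul_of_nonneg_left ht.2.le (by positivity)))
    (by rw [dist_eq_norm, add_zero]) δ ⟨hδ, le_rfl⟩
  rw [dist_eq_norm, zero_add, sub_zero] at this
  exact this.trans (gronwallBound_le_exp_mul_add (by positivity))

lemma norm_sub_discretization_le (hFbound : ∀ x a, ‖F x a‖ ≤ M)
    (hFlip : ∀ a, LipschitzWith K (F · a)) (hFpol : LipschitzWith K fun x => F x (pol x))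
    {s : ℝ → E} (hs : ∀ t, 0 ≤ t → HasDerivAt s (F (s t) (pol (s t))) t) {δ : ℝ} (hδ : 0 ≤ δ)
    {sd : ℕ → E} (hsd0 : sd 0 = s 0)
    (hsd : ∀ k, ∃ u : ℝ → E, u 0 = sd k ∧
      (∀ t, 0 ≤ t → HasDerivAt u (F (u t) (pol (sd k))) t) ∧ sd (k + 1) = u δ) (k : ℕ) :
    ‖s (k * δ) - sd k‖ ≤ k * (2 * K * M * δ * δ) * exp (K * δ) ^ k := by
  have hM : 0 ≤ M := (norm_nonneg _).trans (hFbound (s 0) (pol (s 0)))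
  refine le_nat_mul_mul_pow_of_le_mul_add (e := fun k => ‖s (k * δ) - sd k‖)
    (by simp [hsd0]) (one_le_exp (by positivity)) (by positivity) (fun k => ?_) k
  obtain ⟨u, hu0, hu, hnext⟩ := hsd k
  rw [← hu0] at hu ⊢
  have := norm_sub_frozen_step_le hFbound hFlip hFpol hs hu (by positivity : 0 ≤ (k : ℝ) * δ) hδ
  simpa only [hnext, Nat.cast_succ, add_one_mul] using this

lemma tendsto_discretization_floor_div (hFbound : ∀ x a, ‖F x a‖ ≤ M)
    (hFlip : ∀ a, LipschitzWith K (F · a)) (hFpol : LipschitzWith K fun x => F x (pol x))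
    {s : ℝ → E} (hs : ∀ t, 0 ≤ t → HasDerivAt s (F (s t) (pol (s t))) t) {sd : ℝ → ℕ → E}
    (hsd0 : ∀ δ, 0 < δ → sd δ 0 = s 0)
    (hsd : ∀ δ, 0 < δ → ∀ k, ∃ u : ℝ → E, u 0 = sd δ k ∧
      (∀ t, 0 ≤ t → HasDerivAt u (F (u t) (pol (sd δ k))) t) ∧ sd δ (k + 1) = u δ)
    {t : ℝ} (ht : 0 ≤ t) :
    Tendsto (fun δ => sd δ ⌊t / δ⌋₊) (𝓝[>] 0) (𝓝 (s t)) := by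
  have hM : 0 ≤ M := (norm_nonneg _).trans (hFbound (s 0) (pol (s 0)))
  set C := 2 * K * M * t * exp (K * t) + M with hC
  rw [tendsto_iff_norm_sub_tendsto_zero]
  refine squeeze_zero' (Eventually.of_forall fun _ => norm_nonneg _) ?_
    (((continuous_const_mul C).tendsto' 0 0 (mul_zero C)).mono_left nhdsWithin_le_nhds)
  filter_upwards [self_mem_nhdsWithin] with δ (hδ : 0 < δ)
  set k := ⌊t / δ⌋₊
  have hkδ : (k : ℝ) * δ ≤ t := Nat.floor_div_mul_le ht hδ
  have hdisc : ‖s (k * δ) - sd δ k‖ ≤ 2 * K * M * t * exp (K * t) * δ := by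
    refine (norm_sub_discretization_le hFbound hFlip hFpol hs hδ.le (hsd0 δ hδ) (hsd δ hδ) k).trans ?_
    rw [← exp_nat_mul]
    calc (k : ℝ) * (2 * K * M * δ * δ) * exp (k * (K * δ))
        = 2 * K * M * (k * δ) * exp (K * (k * δ)) * δ := by ring_nf
      _ ≤ 2 * K * M * t * exp (K * t) * δ := by gcongr
  have hcont : ‖s t - s (k * δ)‖ ≤ M * δ :=
    (norm_sub_le_of_hasDerivAt_of_norm_le_s18 hs (fun _ _ => hFbound _ _) (by positivity) hkδ).trans
      (by gcongr; linarith [Nat.lt_floor_div_add_one_mul t hδ])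
  calc ‖sd δ k - s t‖ ≤ ‖sd δ k - s (k * δ)‖ + ‖s (k * δ) - s t‖ :=
        norm_sub_le_norm_sub_add_norm_sub _ _ _
    _ = ‖s (k * δ) - sd δ k‖ + ‖s t - s (k * δ)‖ := by
        rw [norm_sub_rev (sd δ k), norm_sub_rev (s t)]
    _ ≤ C * δ := by rw [hC]; linarith

end FrozenAction

lemma tendsto_discounted_tsum {γ Mr : ℝ} (hγ0 : 0 < γ) (hγ1 : γ < 1) {ρ : ℝ → ℕ → ℝ}
    {f : ℝ → ℝ} (hρ : ∀ δ k, |ρ δ k| ≤ Mr)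
    (hlim : ∀ t, 0 < t → Tendsto (fun δ => ρ δ ⌊t / δ⌋₊) (𝓝[>] 0) (𝓝 (f t))) :
    Tendsto (fun δ => ∑' k : ℕ, exp (k * δ * log γ) * ρ δ k * δ) (𝓝[>] 0)
      (𝓝 (∫ t in Ioi 0, exp (t * log γ) * f t)) := by
  have hlog : log γ < 0 := log_neg hγ0 hγ1
  refine tendsto_tsum_mul_of_dominated (bound := fun t => Mr * exp ((t - 1) * log γ)) ?_ ?_
    fun t ht => ((continuous_exp.tendsto _).comp
      ((tendsto_floor_div_mul_nhdsGT ht.le).mul_const _)).mul (hlim t ht)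
  · have := (exp_neg_integrableOn_Ioi 0 (neg_pos.2 hlog)).const_mul (Mr * exp (-log γ))
    refine IntegrableOn.congr_fun this (fun t _ => ?_) measurableSet_Ioi
    rw [mul_assoc, ← exp_add]
    ring_nf
  · filter_upwards [Ioo_mem_nhdsGT zero_lt_one] with δ ⟨hδ, hδ1⟩ t ht
    have hkδ : t - 1 ≤ ⌊t / δ⌋₊ * δ := by linarith [Nat.lt_floor_div_add_one_mul t hδ]
    rw [abs_mul, abs_exp, mul_comm Mr]
    exact mul_le_mul (exp_le_exp.2 (by nlinarith)) (hρ _ _) (abs_nonneg _) (exp_pos _).le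

theorem value_function_convergence_general
    {n : ℕ} {A : Type*} (γ : ℝ) (hγ0 : 0 < γ) (hγ1 : γ < 1)
    (F : EuclideanSpace ℝ (Fin n) → A → EuclideanSpace ℝ (Fin n))
    (pol : EuclideanSpace ℝ (Fin n) → A) (K M : ℝ)
    (hFbound : ∀ s a, ‖F s a‖ ≤ M)
    (hFlip : ∀ a, LipschitzWith (Real.toNNReal K) (fun s => F s a))
    (hFpollip : LipschitzWith (Real.toNNReal K) (fun s => F s (pol s)))
    (r : EuclideanSpace ℝ (Fin n) → A → ℝ)
    (Mr Lr : ℝ) (hrbound : ∀ s a, |r s a| ≤ Mr)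
    (hrlip : LipschitzWith (Real.toNNReal Lr) (fun s => r s (pol s)))
    (s₀ : EuclideanSpace ℝ (Fin n))
    (s : ℝ → EuclideanSpace ℝ (Fin n)) (hs0 : s 0 = s₀)
    (hs : ∀ t : ℝ, 0 ≤ t → HasDerivAt s (F (s t) (pol (s t))) t)
    (sd : ℝ → ℕ → EuclideanSpace ℝ (Fin n))
    (hsd0 : ∀ δt : ℝ, 0 < δt → sd δt 0 = s₀)
    (hsd : ∀ δt : ℝ, 0 < δt → ∀ k : ℕ,
      ∃ u : ℝ → EuclideanSpace ℝ (Fin n), u 0 = sd δt k ∧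
        (∀ t : ℝ, 0 ≤ t → HasDerivAt u (F (u t) (pol (sd δt k))) t) ∧
        sd δt (k + 1) = u δt) :
    Tendsto (fun δt : ℝ =>
        ∑' k : ℕ, Real.exp (k * δt * Real.log γ) * r (sd δt k) (pol (sd δt k)) * δt)
      (nhdsWithin 0 (Set.Ioi 0))
      (nhds (∫ t in Set.Ioi (0:ℝ),
        Real.exp (t * Real.log γ) * r (s t) (pol (s t)))) :=
  tendsto_discounted_tsum hγ0 hγ1 (fun _ _ => hrbound _ _) fun _ ht =>
    (hrlip.continuous.tendsto _).comp <| tendsto_discretization_floor_div hFbound hFlip hFpollip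
      hs (fun δ hδ => (hsd0 δ hδ).trans hs0.symm) hsd ht.le

/-- Value function convergence: under the hypotheses of the trajectory-convergence
lemma, with bounded reward `r` and `s ↦ r(s, π(s))` Lipschitz, the discretized value
`V^π_δt(s) = Σ_k γ^{kδt} r(s^k_δt, π(s^k_δt)) δt` converges to the continuous value
`V^π(s) = ∫_0^∞ γ^t r(s_t, π(s_t)) dt` as `δt → 0⁺`. -/
theorem value_function_convergence
    {n : ℕ} {A : Type*} (γ : ℝ) (hγ0 : 0 < γ) (hγ1 : γ < 1)
    (F : EuclideanSpace ℝ (Fin n) → A → EuclideanSpace ℝ (Fin n))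
    (pol : EuclideanSpace ℝ (Fin n) → A) (K M : ℝ) (hK : 0 < K) (hM : 0 < M)
    (hFbound : ∀ s a, ‖F s a‖ ≤ M)
    (hFlip : ∀ a, LipschitzWith (Real.toNNReal K) (fun s => F s a))
    (hFpollip : LipschitzWith (Real.toNNReal K) (fun s => F s (pol s)))
    (r : EuclideanSpace ℝ (Fin n) → A → ℝ)
    (Mr Lr : ℝ) (hrbound : ∀ s a, |r s a| ≤ Mr)
    (hrlip : LipschitzWith (Real.toNNReal Lr) (fun s => r s (pol s)))
    (s₀ : EuclideanSpace ℝ (Fin n))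
    (s : ℝ → EuclideanSpace ℝ (Fin n)) (hs0 : s 0 = s₀)
    (hs : ∀ t : ℝ, 0 ≤ t → HasDerivAt s (F (s t) (pol (s t))) t)
    (sd : ℝ → ℕ → EuclideanSpace ℝ (Fin n))
    (hsd0 : ∀ δt : ℝ, 0 < δt → sd δt 0 = s₀)
    (hsd : ∀ δt : ℝ, 0 < δt → ∀ k : ℕ,
      ∃ u : ℝ → EuclideanSpace ℝ (Fin n), u 0 = sd δt k ∧
        (∀ t : ℝ, 0 ≤ t → HasDerivAt u (F (u t) (pol (sd δt k))) t) ∧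
        sd δt (k + 1) = u δt) :
    Tendsto (fun δt : ℝ =>
        ∑' k : ℕ, Real.exp (k * δt * Real.log γ) * r (sd δt k) (pol (sd δt k)) * δt)
      (nhdsWithin 0 (Set.Ioi 0))
      (nhds (∫ t in Set.Ioi (0:ℝ),
        Real.exp (t * Real.log γ) * r (s t) (pol (s t)))) :=
  value_function_convergence_general γ hγ0 hγ1 F pol K M hFbound hFlip hFpollip r Mr Lr hrbound
    hrlip s₀ s hs0 hs sd hsd0 hsd
end
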